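/- arXiv:1305.3224 — 9 statements merged into one kernel-verified Lean document; each statement's English description precedes it below -/
import Mathlib

section
/- Let C be a binary linear code of length n, dimension k ≥ 1, and minimum distance d, and define t(C) to be the minimum, over all generator matrices G of C, of the maximum Hamming weight of a row of G. Then d ≤ t(C) ≤ d + s, where s = n − Σ_{j=0}^{k−1} ⌈d/2^j⌉. -/
/-!
Let `c` be a codeword of minimum weight `w ≥ d` and puncture `C` on the support of `c`. The only
nonzero codeword vanishing off `supp c` is `c` itself, so the residual code has dimension `k - 1`;
and since `y` and `y + c` cannot both be lighter than `c`, its minimum distance is at least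
`⌈w / 2⌉`. By induction on `k` the residual code has a basis whose rows all have weight at most
`(n - w) - ∑_{1 ≤ j < k - 1} ⌈⌈w / 2⌉ / 2 ^ j⌉`. Lifting each row to whichever of its two
preimages `y`, `y + c` meets `supp c` in at most `⌊w / 2⌋` places and adding `c` gives a basis
of `C` whose rows have weight at most `n - ∑_{1 ≤ j < k} ⌈d / 2 ^ j⌉ = d + s`. The lower bound
holds because every row of a generator matrix is a nonzero codeword.
-/

open Finset

def griesmerSum (k d : ℕ) : ℕ := ∑ j ∈ range k, (d + 2 ^ j - 1) / 2 ^ j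

-- `(a + b - 1) / b` is `⌈a / b⌉`, so this says `⌈⌈d / 2⌉ / 2 ^ j⌉ = ⌈d / 2 ^ (j + 1)⌉`.
lemma ceil_half_div_two_pow (d j : ℕ) :
    ((d + 1) / 2 + 2 ^ j - 1) / 2 ^ j = (d + 2 ^ (j + 1) - 1) / 2 ^ (j + 1) := by
  have hj := Nat.one_le_two_pow (n := j)
  have h : d + 2 ^ (j + 1) - 1 = d + 1 + 2 * (2 ^ j - 1) := by rw [pow_succ]; omega
  rw [h, pow_succ', ← Nat.div_div_eq_div_mul, Nat.add_mul_div_left _ _ two_pos]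
  congr 1
  omega

lemma griesmerSum_succ (k d : ℕ) :
    griesmerSum (k + 1) d = d + griesmerSum k ((d + 1) / 2) := by
  simp [griesmerSum, sum_range_succ', ceil_half_div_two_pow, add_comm]

lemma griesmerSum_mono {k d d' : ℕ} (h : d ≤ d') : griesmerSum k d ≤ griesmerSum k d' :=
  sum_le_sum fun _ _ => Nat.div_le_div_right (by omega)

section Puncture

variable {ι R : Type*} [Fintype ι] [Zero R] [DecidableEq R] (c : ι → R)

def weightOnSupport (y : ι → R) : ℕ := #{i | c i ≠ 0 ∧ y i ≠ 0}

lemma hammingNorm_eq_weightOnSupport_add (y : ι → R) :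
    hammingNorm y = weightOnSupport c y + hammingNorm (fun i : {i // c i = 0} => y i) := by
  have hzeros : hammingNorm (fun i : {i // c i = 0} => y i) = #{i | c i = 0 ∧ y i ≠ 0} := by
    rw [hammingNorm, ← Fintype.card_subtype, ← Fintype.card_subtype,
      Fintype.card_congr (Equiv.subtypeSubtypeEquivSubtypeInter (c · = 0) (y · ≠ 0))]
  rw [hzeros, weightOnSupport, hammingNorm, ← filter_filter, ← filter_filter,
    add_comm, ← card_filter_add_card_filter_not (s := filter (y · ≠ 0) univ) (p := (c · = 0))]
  simp only [filter_filter, and_comm]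

lemma card_eq_hammingNorm_add_card_zeros :
    Fintype.card ι = hammingNorm c + Fintype.card {i // c i = 0} := by
  rw [hammingNorm, ← Fintype.card_subtype, Fintype.card_subtype_compl]
  have := Fintype.card_subtype_le (c · = 0)
  omega

end Puncture

section Binary

variable {ι : Type*} (c : ι → ZMod 2)

/-- Puncturing on the support of `c`: `C.map (restrictToZeros c)` is the residual code of `C`
with respect to `c`. -/
def restrictToZeros : (ι → ZMod 2) →ₗ[ZMod 2] ({i // c i = 0} → ZMod 2) :=
  LinearMap.funLeft _ _ Subtype.val

@[simp]
lemma restrictToZeros_apply (y : ι → ZMod 2) (i : {i // c i = 0}) :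
    restrictToZeros c y i = y i := rfl

@[simp]
lemma restrictToZeros_self : restrictToZeros c c = 0 := funext fun i => i.2

variable [Fintype ι]

lemma weightOnSupport_add_weightOnSupport_add_self (y : ι → ZMod 2) :
    weightOnSupport c y + weightOnSupport c (y + c) = hammingNorm c := by
  have hflip : ∀ i, (c i ≠ 0 ∧ (y + c) i ≠ 0) ↔ (c i ≠ 0 ∧ ¬ y i ≠ 0) := fun i => by
    simp only [Pi.add_apply]; generalize c i = a; generalize y i = b; revert a b; decide
  rw [weightOnSupport, weightOnSupport, filter_congr fun i _ => hflip i, hammingNorm,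
    ← filter_filter, ← filter_filter, card_filter_add_card_filter_not]

lemma hammingNorm_eq_weightOnSupport_add_restrictToZeros (y : ι → ZMod 2) :
    hammingNorm y = weightOnSupport c y + hammingNorm (restrictToZeros c y) :=
  hammingNorm_eq_weightOnSupport_add c y

variable {C : Submodule (ZMod 2) (ι → ZMod 2)} {c}

lemma eq_of_restrictToZeros_eq_zero (hmin : ∀ x ∈ C, x ≠ 0 → hammingNorm c ≤ hammingNorm x)
    {x : ι → ZMod 2} (hxC : x ∈ C) (hx0 : x ≠ 0) (hx : restrictToZeros c x = 0) : x = c := by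
  have h1 := hammingNorm_eq_weightOnSupport_add_restrictToZeros c x
  have h2 := hammingNorm_eq_weightOnSupport_add_restrictToZeros c (x + c)
  have h3 := weightOnSupport_add_weightOnSupport_add_self c x
  have h4 := hmin x hxC hx0
  rw [hx, hammingNorm_zero] at h1
  rw [map_add, hx, restrictToZeros_self, add_zero, hammingNorm_zero] at h2
  have hxc : x + c = 0 := hammingNorm_eq_zero.1 (by omega)
  exact funext fun i => CharTwo.add_eq_zero.1 (congrFun hxc i)

lemma finrank_map_restrictToZeros_add_one (hcC : c ∈ C) (hc0 : c ≠ 0)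
    (hmin : ∀ x ∈ C, x ≠ 0 → hammingNorm c ≤ hammingNorm x) :
    Module.finrank (ZMod 2) (C.map (restrictToZeros c)) + 1 = Module.finrank (ZMod 2) C := by
  set f := (restrictToZeros c).domRestrict C
  have hker : LinearMap.ker f = Submodule.span (ZMod 2) {⟨c, hcC⟩} := by
    refine le_antisymm (fun x hx => ?_) ?_
    · by_cases hx0 : x = 0
      · simp [hx0]
      · have : x = ⟨c, hcC⟩ :=
          Subtype.ext (eq_of_restrictToZeros_eq_zero hmin x.2 (by simpa using hx0) hx)
        exact this ▸ Submodule.mem_span_singleton_self _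
    · simp [Submodule.span_le, f]
  have := LinearMap.finrank_range_add_finrank_ker f
  rwa [LinearMap.range_domRestrict, hker, finrank_span_singleton (by simpa using hc0)] at this

lemma hammingNorm_le_two_mul_of_mem_map_restrictToZeros (hcC : c ∈ C)
    (hmin : ∀ x ∈ C, x ≠ 0 → hammingNorm c ≤ hammingNorm x) {x : {i // c i = 0} → ZMod 2}
    (hx : x ∈ C.map (restrictToZeros c)) (hx0 : x ≠ 0) : hammingNorm c ≤ 2 * hammingNorm x := by
  obtain ⟨y, hyC, rfl⟩ := hx
  have hry : restrictToZeros c (y + c) = restrictToZeros c y := by simp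
  have hy0 : y ≠ 0 := by rintro rfl; simp at hx0
  have hyc0 : y + c ≠ 0 := by intro h; rw [h, map_zero] at hry; exact hx0 hry.symm
  have h1 := hammingNorm_eq_weightOnSupport_add_restrictToZeros c y
  have h2 := hammingNorm_eq_weightOnSupport_add_restrictToZeros c (y + c)
  have h3 := weightOnSupport_add_weightOnSupport_add_self c y
  have h4 := hmin y hyC hy0
  have h5 := hmin (y + c) (C.add_mem hyC hcC) hyc0
  rw [hry] at h2
  omega

lemma exists_lift_restrictToZeros (hcC : c ∈ C) {x : {i // c i = 0} → ZMod 2}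
    (hx : x ∈ C.map (restrictToZeros c)) :
    ∃ y ∈ C, restrictToZeros c y = x ∧ 2 * hammingNorm y ≤ hammingNorm c + 2 * hammingNorm x := by
  obtain ⟨y, hyC, rfl⟩ := hx
  have h1 := hammingNorm_eq_weightOnSupport_add_restrictToZeros c y
  have h2 := hammingNorm_eq_weightOnSupport_add_restrictToZeros c (y + c)
  have h3 := weightOnSupport_add_weightOnSupport_add_self c y
  have hry : restrictToZeros c (y + c) = restrictToZeros c y := by simp
  by_cases hy : 2 * weightOnSupport c y ≤ hammingNorm c
  · exact ⟨y, hyC, rfl, by omega⟩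
  · exact ⟨y + c, C.add_mem hyC hcC, hry, by rw [hry] at h2; omega⟩

end Binary

lemma linearIndependent_finCons_of_comp {K V W : Type*} [DivisionRing K] [AddCommGroup V]
    [Module K V] [AddCommGroup W] [Module K W] (f : V →ₗ[K] W) {x : V} (hx : x ≠ 0)
    (hfx : f x = 0) {m : ℕ} {v : Fin m → V} (hv : LinearIndependent K (f ∘ v)) :
    LinearIndependent K (Fin.cons x v : Fin (m + 1) → V) :=
  linearIndependent_finCons.2 ⟨hv.of_comp f, fun hmem =>
    hx (Submodule.disjoint_def.1 (Submodule.range_ker_disjoint hv) x hmem hfx)⟩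

lemma Submodule.exists_min_hammingNorm {ι : Type*} [Fintype ι]
    {C : Submodule (ZMod 2) (ι → ZMod 2)} (hC : C ≠ ⊥) :
    ∃ c ∈ C, c ≠ 0 ∧ ∀ x ∈ C, x ≠ 0 → hammingNorm c ≤ hammingNorm x := by
  obtain ⟨c, ⟨hcC, hc0⟩, hmin⟩ := Set.exists_min_image {x | x ∈ C ∧ x ≠ 0} hammingNorm
    (Set.toFinite _) (C.exists_mem_ne_zero_of_ne_bot hC)
  exact ⟨c, hcC, hc0, fun x hxC hx0 => hmin x ⟨hxC, hx0⟩⟩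

lemma Submodule.span_range_eq_of_linearIndependent {K V : Type*} [DivisionRing K]
    [AddCommGroup V] [Module K V] [FiniteDimensional K V] {C : Submodule K V} {m : ℕ}
    {G : Fin m → V} (hG : LinearIndependent K G) (hGC : ∀ i, G i ∈ C)
    (hm : Module.finrank K C = m) : Submodule.span K (Set.range G) = C :=
  Submodule.eq_of_le_of_finrank_le (Submodule.span_le.2 (Set.range_subset_iff.2 hGC))
    (by rw [hm, finrank_span_eq_card hG, Fintype.card_fin])

theorem exists_basis_hammingNorm_add_griesmerSum_le (k : ℕ) {ι : Type*} [Fintype ι]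
    (C : Submodule (ZMod 2) (ι → ZMod 2)) (hk : Module.finrank (ZMod 2) C = k + 1) {d : ℕ}
    (hd : ∀ x ∈ C, x ≠ 0 → d ≤ hammingNorm x) :
    ∃ G : Fin (k + 1) → ι → ZMod 2, LinearIndependent (ZMod 2) G ∧
      Submodule.span (ZMod 2) (Set.range G) = C ∧
      ∀ i, hammingNorm (G i) + griesmerSum k ((d + 1) / 2) ≤ Fintype.card ι := by
  induction k generalizing ι d with
  | zero =>
    obtain ⟨c, hcC, hc0, -⟩ := Submodule.exists_min_hammingNorm (C := C) (by rintro rfl; simp at hk)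
    have hG : LinearIndependent (ZMod 2) (fun _ : Fin 1 => c) := linearIndependent_unique_iff.2 hc0
    refine ⟨_, hG, Submodule.span_range_eq_of_linearIndependent hG (fun _ => hcC) hk,
      fun _ => ?_⟩
    simpa [griesmerSum] using hammingNorm_le_card_fintype
  | succ k ih =>
    obtain ⟨c, hcC, hc0, hmin⟩ := Submodule.exists_min_hammingNorm (C := C) (by rintro rfl; simp at hk)
    obtain ⟨b, hb, hbC, hbw⟩ := ih (C.map (restrictToZeros c))
      (by have := finrank_map_restrictToZeros_add_one hcC hc0 hmin; omega)
      (d := (hammingNorm c + 1) / 2) (fun x hx hx0 => by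
        have := hammingNorm_le_two_mul_of_mem_map_restrictToZeros hcC hmin hx hx0; omega)
    have hbmem (i : Fin (k + 1)) : b i ∈ C.map (restrictToZeros c) :=
      hbC ▸ Submodule.subset_span (Set.mem_range_self i)
    choose y hyC hyb hyw using fun i => exists_lift_restrictToZeros hcC (hbmem i)
    have hG : LinearIndependent (ZMod 2) (Fin.cons c y : Fin (k + 2) → ι → ZMod 2) :=
      linearIndependent_finCons_of_comp _ hc0 (restrictToZeros_self c)
        (by rwa [show restrictToZeros c ∘ y = b from funext hyb])
    refine ⟨_, hG, Submodule.span_range_eq_of_linearIndependent hG (Fin.cases hcC hyC) hk, ?_⟩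
    have hcard := card_eq_hammingNorm_add_card_zeros c
    have hgs : griesmerSum (k + 1) ((d + 1) / 2)
        ≤ (hammingNorm c + 1) / 2 + griesmerSum k (((hammingNorm c + 1) / 2 + 1) / 2) :=
      (griesmerSum_mono (by have := hd c hcC hc0; omega)).trans (griesmerSum_succ _ _).le
    have hb0 := hammingNorm_le_two_mul_of_mem_map_restrictToZeros hcC hmin (hbmem 0) (hb.ne_zero 0)
    refine Fin.cases ?_ fun i => ?_
    · have := hbw 0
      simp only [Fin.cons_zero]
      omega
    · have := hbw i
      have := hyw i
      simp only [Fin.cons_succ]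
      omega

/-- for a binary linear code `C` of length `n`, dimension `k ≥ 1` and minimum
distance `d`, the quantity `t(C)` — the minimum over generator matrices of `C` of the
maximum row weight — satisfies `d ≤ t(C) ≤ d + s`, where
`s = n − Σ_{j<k} ⌈d/2^j⌉`. -/
theorem stmt_3 {n k d : ℕ} (C : Submodule (ZMod 2) (Fin n → ZMod 2))
    (hk : Module.finrank (ZMod 2) C = k) (hk1 : 1 ≤ k)
    (hd : IsLeast {w : ℕ | ∃ x ∈ C, x ≠ 0 ∧ hammingNorm x = w} d) :
    d ≤ sInf {t : ℕ | ∃ G : Fin k → (Fin n → ZMod 2),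
          LinearIndependent (ZMod 2) G ∧ Submodule.span (ZMod 2) (Set.range G) = C ∧
          t = Finset.univ.sup fun i => hammingNorm (G i)} ∧
    sInf {t : ℕ | ∃ G : Fin k → (Fin n → ZMod 2),
          LinearIndependent (ZMod 2) G ∧ Submodule.span (ZMod 2) (Set.range G) = C ∧
          t = Finset.univ.sup fun i => hammingNorm (G i)}
      ≤ d + (n - ∑ j ∈ Finset.range k, (d + 2 ^ j - 1) / 2 ^ j) := by
  obtain ⟨m, rfl⟩ : ∃ m, k = m + 1 := ⟨k - 1, by omega⟩
  have hdC (x) (hxC : x ∈ C) (hx0 : x ≠ 0) : d ≤ hammingNorm x := hd.2 ⟨x, hxC, hx0, rfl⟩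
  have hrow (G : Fin (m + 1) → Fin n → ZMod 2) (hG : LinearIndependent (ZMod 2) G)
      (hGC : Submodule.span (ZMod 2) (Set.range G) = C) : d ≤ hammingNorm (G 0) :=
    hdC _ (hGC ▸ Submodule.subset_span (Set.mem_range_self 0)) (hG.ne_zero 0)
  obtain ⟨G, hG, hGC, hGw⟩ := exists_basis_hammingNorm_add_griesmerSum_le m C hk hdC
  rw [Fintype.card_fin] at hGw
  set T := {t : ℕ | ∃ G : Fin (m + 1) → (Fin n → ZMod 2),
    LinearIndependent (ZMod 2) G ∧ Submodule.span (ZMod 2) (Set.range G) = C ∧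
    t = Finset.univ.sup fun i => hammingNorm (G i)}
  have hGT : (Finset.univ.sup fun i => hammingNorm (G i)) ∈ T := ⟨G, hG, hGC, rfl⟩
  refine ⟨le_csInf ⟨_, hGT⟩ ?_, (Nat.sInf_le hGT).trans (Finset.sup_le fun i _ => ?_)⟩
  · rintro t ⟨G', hG', hG'C, rfl⟩
    exact (hrow G' hG' hG'C).trans (Finset.le_sup (f := fun i => hammingNorm (G' i)) (mem_univ 0))
  · change _ ≤ d + (n - griesmerSum (m + 1) d)
    have := hGw i
    have := hGw 0
    have := hrow G hG hGC
    rw [griesmerSum_succ]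
    omega
end

section
/- Fix m ≥ 2 and let n = 2^m − 1. Let H be the m×n matrix over F₂ whose column indexed by j ∈ {1,…,n} is the binary representation of j, and let C = {x ∈ F₂ⁿ : Hx = 0} be the Hamming code of length n. Then the vectors v_{i,j} ∈ F₂ⁿ with support exactly {i, 2^j, i + 2^j} (coordinates indexed by {1,…,n}), for 1 ≤ j ≤ m−1 and 1 ≤ i < 2^j, form a basis of C. Consequently C has dimension 2^m − 1 − m and has a generator matrix all of whose rows have Hamming weight 3, i.e., the Hamming code admits a linear encoding with update-efficiency 3. -/
/-!
Column `t` of the check matrix is the binary expansion of `t`. Since `i < 2^j`, the expansion of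
`i + 2^j` is that of `i` with bit `j` added, so the three columns indexed by the support of
`v_{i,j}` sum to zero. The largest coordinate `i + 2^j` of the support determines `(j, i)`
(`j` is its binary logarithm), so the vectors are in echelon form and hence independent. The
columns indexed by `2^r` are the unit vectors, so the check matrix has rank `m` and the code has
dimension `2^m - 1 - m = ∑_{j=1}^{m-1} (2^j - 1)`, which is the number of vectors: they span.
-/

open Finset Matrix

theorem linearIndependent_of_injective_leading {ι κ R : Type*} [Ring R] [NoZeroDivisors R]
    [LinearOrder κ] {v : ι → κ → R} (lead : ι → κ) (hlead : Function.Injective lead)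
    (hne : ∀ i, v i (lead i) ≠ 0) (hzero : ∀ i c, lead i < c → v i c = 0) :
    LinearIndependent R v := by
  classical
  rw [linearIndependent_iff']
  intro s g hg i hi
  by_contra hgi
  obtain ⟨b, hb, hmax⟩ :=
    ({x ∈ s | g x ≠ 0}).exists_max_image lead ⟨i, mem_filter.mpr ⟨hi, hgi⟩⟩
  rw [mem_filter] at hb
  have hsum : ∑ x ∈ s, g x * v x (lead b) = 0 := by
    simpa only [Finset.sum_apply, Pi.smul_apply, smul_eq_mul, Pi.zero_apply] using
      congrFun hg (lead b)
  rw [sum_eq_single_of_mem b hb.1] at hsum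
  · exact mul_ne_zero hb.2 (hne b) hsum
  · intro x hx hxb
    by_cases hgx : g x = 0
    · rw [hgx, zero_mul]
    · have hlt : lead x < lead b :=
        (hmax x (mem_filter.mpr ⟨hx, hgx⟩)).lt_of_ne (hlead.ne hxb)
      rw [hzero x _ hlt, mul_zero]

-- Coordinates are 1-based: coordinate `c : Fin n` stands for the position `c + 1`.
def oneBasedIndicator (R : Type*) [Zero R] [One R] (n : ℕ) (T : Finset ℕ) : Fin n → R :=
  fun c => if (c : ℕ) + 1 ∈ T then 1 else 0

theorem sum_fin_ite_succ_mem {M : Type*} [AddCommMonoid M] {n : ℕ} {T : Finset ℕ}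
    (hT : T ⊆ Icc 1 n) (g : ℕ → M) :
    ∑ c : Fin n, (if (c : ℕ) + 1 ∈ T then g ((c : ℕ) + 1) else 0) = ∑ t ∈ T, g t := by
  rw [Fin.sum_univ_eq_sum_range (fun c => if c + 1 ∈ T then g (c + 1) else 0), range_eq_Ico,
    sum_Ico_add' (fun c => if c ∈ T then g c else 0), sum_ite_mem, zero_add,
    inter_eq_right.mpr]
  intro t ht
  have := hT ht
  simp only [mem_Icc, mem_Ico] at this ⊢
  omega

theorem hammingNorm_oneBasedIndicator (R : Type*) [Zero R] [One R] [NeZero (1 : R)]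
    [DecidableEq R] {n : ℕ} {T : Finset ℕ} (hT : T ⊆ Icc 1 n) :
    hammingNorm (oneBasedIndicator R n T) = #T := by
  rw [hammingNorm, card_filter, card_eq_sum_ones, ← sum_fin_ite_succ_mem hT fun _ => 1]
  simp only [oneBasedIndicator, ne_eq, ite_eq_right_iff, one_ne_zero, imp_false, not_not]

theorem mulVec_oneBasedIndicator {ι R : Type*} [NonAssocSemiring R] {n : ℕ}
    {A : Matrix ι (Fin n) R} (col : ℕ → ι → R) (hA : ∀ i c, A i c = col ((c : ℕ) + 1) i)
    {T : Finset ℕ} (hT : T ⊆ Icc 1 n) :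
    A *ᵥ oneBasedIndicator R n T = ∑ t ∈ T, col t := by
  funext i
  simp only [Matrix.mulVec, dotProduct, oneBasedIndicator, mul_ite, mul_one, mul_zero, hA,
    Finset.sum_apply]
  exact sum_fin_ite_succ_mem hT (fun t => col t i)

def binaryColumn (m t : ℕ) : Fin m → ZMod 2 := fun r => if t.testBit r then 1 else 0

theorem binaryColumn_two_pow {m : ℕ} (r : Fin m) :
    binaryColumn m (2 ^ (r : ℕ)) = Pi.single r 1 := by
  funext r'
  simp [binaryColumn, Nat.testBit_two_pow, Pi.single_apply, Fin.ext_iff, eq_comm]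

theorem binaryColumn_add_two_pow {m i j : ℕ} (hi : i < 2 ^ j) :
    binaryColumn m (i + 2 ^ j) = binaryColumn m i + binaryColumn m (2 ^ j) := by
  have hor : i + 2 ^ j = 2 ^ j ||| i := by
    simpa [add_comm] using Nat.two_pow_add_eq_or_of_lt hi 1
  funext r
  have hdisj : (2 ^ j).testBit r = true → i.testBit r = false := by
    rw [Nat.testBit_two_pow, decide_eq_true_eq]
    rintro rfl
    exact Nat.testBit_lt_two_pow hi
  simp only [binaryColumn, hor, Nat.testBit_or, Pi.add_apply]
  cases hb : (2 ^ j).testBit r <;> cases hb' : i.testBit r <;> simp_all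

def tripleSupport (j i : ℕ) : Finset ℕ := {i, 2 ^ j, i + 2 ^ j}

section tripleSupport

variable {i j : ℕ}

theorem card_tripleSupport (h0 : 0 < i) (hi : i < 2 ^ j) : #(tripleSupport j i) = 3 :=
  card_eq_three.mpr ⟨_, _, _, by omega, by omega, by omega, rfl⟩

theorem tripleSupport_subset_Icc {m : ℕ} (h0 : 0 < i) (hi : i < 2 ^ j) (hj : j < m) :
    tripleSupport j i ⊆ Icc 1 (2 ^ m - 1) := by
  have : 2 ^ j * 2 ≤ 2 ^ m := by rw [← pow_succ]; exact Nat.pow_le_pow_right two_pos hj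
  intro t ht
  simp only [tripleSupport, mem_insert, mem_singleton, mem_Icc] at ht ⊢
  omega

theorem sum_binaryColumn_tripleSupport {m : ℕ} (h0 : 0 < i) (hi : i < 2 ^ j) :
    ∑ t ∈ tripleSupport j i, binaryColumn m t = 0 := by
  rw [tripleSupport, sum_insert (by simp; omega), sum_pair (by omega), binaryColumn_add_two_pow hi,
    ← add_assoc]
  exact funext fun r => CharTwo.add_self_eq_zero (_ : ZMod 2)

theorem eq_of_add_two_pow_eq {i' j' : ℕ} (hi : i < 2 ^ j) (hi' : i' < 2 ^ j')
    (h : i + 2 ^ j = i' + 2 ^ j') : j = j' ∧ i = i' := by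
  have log_eq {i j : ℕ} (hi : i < 2 ^ j) : Nat.log 2 (i + 2 ^ j) = j :=
    Nat.log_eq_of_pow_le_of_lt_pow (by omega) (by rw [pow_succ]; omega)
  have hj : j = j' := by rw [← log_eq hi, ← log_eq hi', h]
  subst hj
  omega

end tripleSupport

theorem sum_Icc_two_pow_sub_one (k : ℕ) :
    ∑ j ∈ Icc 1 k, (2 ^ j - 1) = 2 ^ (k + 1) - 2 - k := by
  induction k with
  | zero => rfl
  | succ k ih =>
    rw [sum_Icc_succ_top (by omega), ih, pow_succ 2 (k + 1)]
    have : k + 1 < 2 ^ (k + 1) := Nat.lt_two_pow_self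
    omega

def hammingCheckMatrix (m : ℕ) : Matrix (Fin m) (Fin (2 ^ m - 1)) (ZMod 2) :=
  Matrix.of fun r c => binaryColumn m ((c : ℕ) + 1) r

theorem hammingCheckMatrix_mulVec_oneBasedIndicator {m : ℕ} {T : Finset ℕ}
    (hT : T ⊆ Icc 1 (2 ^ m - 1)) :
    hammingCheckMatrix m *ᵥ oneBasedIndicator (ZMod 2) _ T = ∑ t ∈ T, binaryColumn m t :=
  mulVec_oneBasedIndicator _ (fun _ _ => rfl) hT

theorem finrank_ker_hammingCheckMatrix (m : ℕ) :
    Module.finrank (ZMod 2) (LinearMap.ker (hammingCheckMatrix m).mulVecLin) = 2 ^ m - 1 - m := by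
  have hrange : LinearMap.range (hammingCheckMatrix m).mulVecLin = ⊤ := by
    rw [eq_top_iff, ← (Pi.basisFun (ZMod 2) (Fin m)).span_eq, Submodule.span_le]
    rintro _ ⟨r, rfl⟩
    have hr : {2 ^ (r : ℕ)} ⊆ Icc 1 (2 ^ m - 1) := by
      have := Nat.pow_lt_pow_right one_lt_two r.isLt
      simp only [singleton_subset_iff, mem_Icc, Nat.one_le_two_pow, true_and]
      omega
    refine ⟨oneBasedIndicator (ZMod 2) _ {2 ^ (r : ℕ)}, ?_⟩
    rw [mulVecLin_apply, hammingCheckMatrix_mulVec_oneBasedIndicator hr,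
      sum_singleton, binaryColumn_two_pow, Pi.basisFun_apply]
  have := LinearMap.finrank_range_add_finrank_ker (hammingCheckMatrix m).mulVecLin
  rw [hrange, finrank_top, Module.finrank_fin_fun, Module.finrank_fin_fun] at this
  omega

abbrev TripleIndex (m : ℕ) :=
  {ji : ℕ × ℕ // 1 ≤ ji.1 ∧ ji.1 ≤ m - 1 ∧ 1 ≤ ji.2 ∧ ji.2 < 2 ^ ji.1}

namespace TripleIndex

variable {m : ℕ}

def equivSigma (m : ℕ) :
    TripleIndex m ≃ ((Icc 1 (m - 1)).sigma fun j => Ico 1 (2 ^ j) : Finset (Σ _ : ℕ, ℕ)) :=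
  (Equiv.sigmaEquivProd ℕ ℕ).symm.subtypeEquiv fun ji => by
    simp only [mem_sigma, mem_Icc, mem_Ico, Equiv.sigmaEquivProd_symm_apply]
    omega

instance : Finite (TripleIndex m) := .of_equiv _ (equivSigma m).symm

theorem natCard_eq (m : ℕ) : Nat.card (TripleIndex m) = 2 ^ m - 1 - m := by
  rw [Nat.card_congr (equivSigma m), Nat.card_eq_finsetCard, card_sigma]
  simp only [Nat.card_Ico]
  rcases m with _ | m
  · rfl
  · rw [Nat.add_sub_cancel, sum_Icc_two_pow_sub_one]
    omega

variable (s : TripleIndex m)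

theorem snd_pos : 0 < s.1.2 := s.2.2.2.1

theorem snd_lt_two_pow : s.1.2 < 2 ^ s.1.1 := s.2.2.2.2

theorem fst_lt : s.1.1 < m := by have := s.2; omega

theorem support_subset : tripleSupport s.1.1 s.1.2 ⊆ Icc 1 (2 ^ m - 1) :=
  tripleSupport_subset_Icc s.snd_pos s.snd_lt_two_pow s.fst_lt

def vec : Fin (2 ^ m - 1) → ZMod 2 := oneBasedIndicator (ZMod 2) _ (tripleSupport s.1.1 s.1.2)

theorem vec_mem_ker : s.vec ∈ LinearMap.ker (hammingCheckMatrix m).mulVecLin := by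
  rw [LinearMap.mem_ker, mulVecLin_apply, vec,
    hammingCheckMatrix_mulVec_oneBasedIndicator s.support_subset]
  exact sum_binaryColumn_tripleSupport s.snd_pos s.snd_lt_two_pow

theorem hammingNorm_vec : hammingNorm s.vec = 3 := by
  rw [vec, hammingNorm_oneBasedIndicator _ s.support_subset,
    card_tripleSupport s.snd_pos s.snd_lt_two_pow]

theorem linearIndependent_vec : LinearIndependent (ZMod 2) (vec (m := m)) := by
  refine linearIndependent_of_injective_leading
    (fun s => ⟨s.1.2 + 2 ^ s.1.1 - 1, ?_⟩) (fun s s' h => ?_) (fun s => ?_) (fun s c hc => ?_)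
  · have := s.support_subset (by simp [tripleSupport] : s.1.2 + 2 ^ s.1.1 ∈ _)
    rw [mem_Icc] at this
    omega
  · obtain ⟨hj, hi⟩ := eq_of_add_two_pow_eq s.snd_lt_two_pow s'.snd_lt_two_pow
      (by simp only [Fin.mk.injEq] at h; have := s.snd_pos; have := s'.snd_pos; omega)
    exact Subtype.ext (Prod.ext hj hi)
  · simp only [vec, oneBasedIndicator, tripleSupport, mem_insert, mem_singleton, ne_eq,
      ite_eq_right_iff, one_ne_zero, imp_false, not_or, not_and, Decidable.not_not]
    omega
  · simp only [Fin.lt_def] at hc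
    have := s.snd_pos
    simp only [vec, oneBasedIndicator, tripleSupport, mem_insert, mem_singleton, ite_eq_right_iff,
      one_ne_zero, imp_false, not_or]
    omega

theorem span_range_vec :
    Submodule.span (ZMod 2) (Set.range (vec (m := m))) =
      LinearMap.ker (hammingCheckMatrix m).mulVecLin := by
  have : Fintype (TripleIndex m) := .ofFinite _
  refine Submodule.eq_of_le_of_finrank_eq
    (Submodule.span_le.mpr (Set.range_subset_iff.mpr vec_mem_ker)) ?_
  rw [finrank_span_eq_card linearIndependent_vec, Fintype.card_eq_nat_card, natCard_eq,
    finrank_ker_hammingCheckMatrix]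

end TripleIndex

theorem stmt_4_general {m : ℕ}
    (H : Matrix (Fin m) (Fin (2 ^ m - 1)) (ZMod 2))
    (hH : ∀ i j, H i j = if Nat.testBit ((j : ℕ) + 1) (i : ℕ) then 1 else 0)
    (C : Submodule (ZMod 2) (Fin (2 ^ m - 1) → ZMod 2))
    (hC : C = LinearMap.ker H.mulVecLin)
    (v : {ji : ℕ × ℕ // 1 ≤ ji.1 ∧ ji.1 ≤ m - 1 ∧ 1 ≤ ji.2 ∧ ji.2 < 2 ^ ji.1} →
      (Fin (2 ^ m - 1) → ZMod 2))
    (hv : ∀ ji c, v ji c =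
      if (c : ℕ) + 1 = ji.val.2 ∨ (c : ℕ) + 1 = 2 ^ ji.val.1 ∨
         (c : ℕ) + 1 = ji.val.2 + 2 ^ ji.val.1
      then 1 else 0) :
    LinearIndependent (ZMod 2) v ∧ (∀ ji, v ji ∈ C) ∧
    Submodule.span (ZMod 2) (Set.range v) = C ∧
    Module.finrank (ZMod 2) C = 2 ^ m - 1 - m ∧
    ∃ G : Fin (2 ^ m - 1 - m) → (Fin (2 ^ m - 1) → ZMod 2),
      LinearIndependent (ZMod 2) G ∧ Submodule.span (ZMod 2) (Set.range G) = C ∧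
      ∀ i, hammingNorm (G i) = 3 := by
  obtain rfl : H = hammingCheckMatrix m := Matrix.ext hH
  obtain rfl : v = TripleIndex.vec := funext fun s => funext fun c => by
    simp only [hv, TripleIndex.vec, oneBasedIndicator, tripleSupport, mem_insert, mem_singleton]
  subst hC
  refine ⟨TripleIndex.linearIndependent_vec, TripleIndex.vec_mem_ker, TripleIndex.span_range_vec,
    finrank_ker_hammingCheckMatrix m, ?_⟩
  let e := Finite.equivFinOfCardEq (TripleIndex.natCard_eq m)
  refine ⟨TripleIndex.vec ∘ e.symm, TripleIndex.linearIndependent_vec.comp _ e.symm.injective,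
    ?_, fun k => TripleIndex.hammingNorm_vec _⟩
  rw [Set.range_comp, e.symm.range_eq_univ, Set.image_univ, TripleIndex.span_range_vec]

/-- for the binary Hamming code of length `n = 2^m − 1` (kernel of the `m × n`
matrix whose column indexed by `j ∈ {1,…,n}` is the binary representation of `j`), the
vectors `v_{i,j}` with support exactly `{i, 2^j, i+2^j}` (1-based coordinates), for
`1 ≤ j ≤ m−1`, `1 ≤ i < 2^j`, form a basis of the code.  Consequently the code has
dimension `2^m − 1 − m` and a generator matrix all of whose rows have Hamming weight `3`,
i.e. it admits a linear encoding with update-efficiency `3`. -/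
theorem stmt_4 {m : ℕ} (hm : 2 ≤ m)
    (H : Matrix (Fin m) (Fin (2 ^ m - 1)) (ZMod 2))
    (hH : ∀ i j, H i j = if Nat.testBit ((j : ℕ) + 1) (i : ℕ) then 1 else 0)
    (C : Submodule (ZMod 2) (Fin (2 ^ m - 1) → ZMod 2))
    (hC : C = LinearMap.ker H.mulVecLin)
    (v : {ji : ℕ × ℕ // 1 ≤ ji.1 ∧ ji.1 ≤ m - 1 ∧ 1 ≤ ji.2 ∧ ji.2 < 2 ^ ji.1} →
      (Fin (2 ^ m - 1) → ZMod 2))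
    (hv : ∀ ji c, v ji c =
      if (c : ℕ) + 1 = ji.val.2 ∨ (c : ℕ) + 1 = 2 ^ ji.val.1 ∨
         (c : ℕ) + 1 = ji.val.2 + 2 ^ ji.val.1
      then 1 else 0) :
    LinearIndependent (ZMod 2) v ∧ (∀ ji, v ji ∈ C) ∧
    Submodule.span (ZMod 2) (Set.range v) = C ∧
    Module.finrank (ZMod 2) C = 2 ^ m - 1 - m ∧
    ∃ G : Fin (2 ^ m - 1 - m) → (Fin (2 ^ m - 1) → ZMod 2),
      LinearIndependent (ZMod 2) G ∧ Submodule.span (ZMod 2) (Set.range G) = C ∧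
      ∀ i, hammingNorm (G i) = 3 :=
  stmt_4_general H hH C hC v hv
end

section
/- Let G be a k×n matrix over F₂ every row of which has Hamming weight at most t, let p ∈ (0,1), and let I ⊆ {1,…,n} be a random subset containing each element independently with probability 1−p. Let G_I be the submatrix of G formed by the columns indexed by I. Then Pr(rank(G_I) = k) < exp(−k²·p^{2t}/(2n)), where the rank is over F₂. -/
/-!
Instead of the `E[rank]` and Azuma route, we show `Pr(rank(G_I) = k) ≤ (1 - p^t)^k` over any field,
adding the rows one at a time: a new row `w` keeps the rows independent on `I` only if
`w|_I` is not in the span of the old rows. Starting from any `I` on which the old rows are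
independent, erasing a suitable part of `supp w` reaches a set `J` on which they are still
independent but `w|_J` lies in their span. Each such `J` is hit by a family of sets of total
probability at most `p^(-|supp w|) Pr(J)`, so the new row costs a factor `1 - p^|supp w|`.
Then `(1 - p^t)^k ≤ exp(-k p^t) < exp(-k² p^(2t)/(2n))` when `k ≤ n`; for `k > n` the rank is
never `k`.
-/

open Finset

section ErasureWeight

variable {ι : Type*} [Fintype ι] (p : ℝ)

/-- The probability that exactly the coordinates in `I` survive when each coordinate is erased
independently with probability `p`. -/
noncomputable def erasureWeight (I : Finset ι) : ℝ := (1 - p) ^ #I * p ^ (Fintype.card ι - #I)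

variable {p}

theorem erasureWeight_nonneg (hp0 : 0 ≤ p) (hp1 : p ≤ 1) (I : Finset ι) :
    0 ≤ erasureWeight p I :=
  mul_nonneg (pow_nonneg (sub_nonneg.2 hp1) _) (pow_nonneg hp0 _)

variable (p) in
theorem sum_erasureWeight : ∑ I : Finset ι, erasureWeight p I = 1 := by
  simp only [erasureWeight, Fintype.sum_pow_mul_eq_add_pow, sub_add_cancel, one_pow]

variable [DecidableEq ι]

variable (p) in
theorem pow_card_sdiff_mul_sum_Icc_erasureWeight (J S : Finset ι) :
    p ^ #(S \ J) * ∑ I ∈ Icc J (J ∪ S), erasureWeight p I = erasureWeight p J := by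
  set m := #(S \ J)
  set r := Fintype.card ι - #J - m
  have hdisj : Disjoint J (S \ J) := disjoint_sdiff
  have hm : #J + m ≤ Fintype.card ι := by
    rw [← card_union_of_disjoint hdisj]; exact card_le_univ _
  rw [Icc_eq_image_powerset subset_union_left, union_sdiff_left, sum_image]
  · calc p ^ m * ∑ D ∈ (S \ J).powerset, erasureWeight p (J ∪ D)
        = p ^ m * ∑ D ∈ (S \ J).powerset, (1 - p) ^ #J * p ^ r *
            ((1 - p) ^ #D * p ^ (m - #D)) := by
          congr 1
          refine sum_congr rfl fun D hD => ?_
          have hDm : #D ≤ m := card_le_card (mem_powerset.1 hD)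
          rw [erasureWeight, card_union_of_disjoint (disjoint_of_subset_right (mem_powerset.1 hD)
            hdisj), show Fintype.card ι - (#J + #D) = r + (m - #D) by omega]
          ring
      _ = erasureWeight p J := by
          rw [← mul_sum, sum_pow_mul_eq_add_pow, sub_add_cancel, one_pow, erasureWeight,
            show Fintype.card ι - #J = m + r by omega, pow_add]
          ring
  · intro D hD D' hD' h
    rw [← union_sdiff_cancel_left (disjoint_of_subset_right (mem_powerset.1 hD) hdisj),
      ← union_sdiff_cancel_left (disjoint_of_subset_right (mem_powerset.1 hD') hdisj)]
    exact congrArg (· \ J) h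

theorem pow_card_mul_sum_erasureWeight_le (hp0 : 0 ≤ p) (hp1 : p ≤ 1) (S : Finset ι)
    {A B : Finset (Finset ι)} (h : ∀ I ∈ A, ∃ J ∈ B, J ⊆ I ∧ I ⊆ J ∪ S) :
    p ^ #S * ∑ I ∈ A, erasureWeight p I ≤ ∑ J ∈ B, erasureWeight p J := by
  choose! ψ hψB hψI hIψ using h
  rw [← sum_fiberwise_of_maps_to hψB, mul_sum]
  refine sum_le_sum fun J _ => ?_
  have hfiber : {I ∈ A | ψ I = J} ⊆ Icc J (J ∪ S) := fun I hI => by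
    obtain ⟨hIA, rfl⟩ := mem_filter.1 hI
    exact mem_Icc.2 ⟨hψI I hIA, hIψ I hIA⟩
  calc p ^ #S * ∑ I ∈ A with ψ I = J, erasureWeight p I
      ≤ p ^ #(S \ J) * ∑ I ∈ Icc J (J ∪ S), erasureWeight p I :=
        mul_le_mul (pow_le_pow_of_le_one hp0 hp1 (card_le_card sdiff_subset))
          (sum_le_sum_of_subset_of_nonneg hfiber fun I _ _ => erasureWeight_nonneg hp0 hp1 I)
          (sum_nonneg fun I _ => erasureWeight_nonneg hp0 hp1 I) (pow_nonneg hp0 _)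
    _ = erasureWeight p J := pow_card_sdiff_mul_sum_Icc_erasureWeight p J S

end ErasureWeight

section RestrictedRows

variable {K ι κ : Type*} [Field K] [Fintype κ] {v : κ → ι → K}

theorem sum_smul_restrict_eq_restrict_iff (J : Finset ι) (c : κ → K) (u : ι → K) :
    ∑ i, c i • J.restrict (v i) = J.restrict u ↔ ∀ j ∈ J, ∑ i, c i * v i j = u j := by
  simp only [funext_iff, Finset.sum_apply, Pi.smul_apply, smul_eq_mul, Finset.restrict,
    Subtype.forall]

theorem linearIndependent_restrict_comp_iff {J : Finset ι} :
    LinearIndependent K (J.restrict ∘ v) ↔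
      ∀ c : κ → K, (∀ j ∈ J, ∑ i, c i * v i j = 0) → c = 0 := by
  rw [Fintype.linearIndependent_iff]
  refine forall_congr' fun c => ?_
  exact imp_congr (sum_smul_restrict_eq_restrict_iff J c 0) funext_iff.symm

theorem restrict_mem_span_restrict_comp_iff {J : Finset ι} {w : ι → K} :
    J.restrict w ∈ Submodule.span K (Set.range (J.restrict ∘ v)) ↔
      ∃ c : κ → K, ∀ j ∈ J, ∑ i, c i * v i j = w j := by
  simp only [Submodule.mem_span_range_iff_exists_fun, Function.comp_apply,
    sum_smul_restrict_eq_restrict_iff]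

theorem card_le_of_linearIndependent_restrict_comp {J : Finset ι}
    (h : LinearIndependent K (J.restrict ∘ v)) : Fintype.card κ ≤ #J := by
  simpa using h.fintype_card_le_finrank

variable [DecidableEq ι]

theorem exists_insert_restrict_mem_span {I J : Finset ι} {w : ι → K}
    (hI : LinearIndependent K (I.restrict ∘ v)) (hJ : ¬LinearIndependent K (J.restrict ∘ v))
    (hw : J.restrict w ∈ Submodule.span K (Set.range (J.restrict ∘ v))) :
    ∃ j ∈ I, j ∉ J ∧
      (insert j J).restrict w ∈ Submodule.span K (Set.range ((insert j J).restrict ∘ v)) := by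
  rw [linearIndependent_restrict_comp_iff] at hI hJ
  simp only [restrict_mem_span_restrict_comp_iff] at hw ⊢
  simp only [not_forall] at hJ
  obtain ⟨g, hgJ, hg⟩ := hJ
  obtain ⟨c, hc⟩ := hw
  obtain ⟨j, hjI, hgj⟩ : ∃ j ∈ I, ∑ i, g i * v i j ≠ 0 := by
    by_contra! h
    exact hg (hI g h)
  refine ⟨j, hjI, fun hjJ => hgj (hgJ j hjJ), ?_⟩
  -- adding a multiple of `g`, which vanishes on `J`, makes the combination match `w` at `j` too
  set a := (w j - ∑ i, c i * v i j) / ∑ i, g i * v i j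
  have hcomb : ∀ l, ∑ i, (c + a • g) i * v i l = ∑ i, c i * v i l + a * ∑ i, g i * v i l := by
    intro l
    simp only [Pi.add_apply, Pi.smul_apply, smul_eq_mul, add_mul, sum_add_distrib, mul_sum,
      mul_assoc]
  refine ⟨c + a • g, fun l hl => ?_⟩
  rw [hcomb]
  rcases mem_insert.1 hl with rfl | hlJ
  · simp only [a, div_mul_cancel₀ _ hgj, add_sub_cancel]
  · rw [hgJ l hlJ, mul_zero, add_zero, hc l hlJ]

theorem exists_subset_linearIndependent_restrict_mem_span [Fintype ι] [DecidableEq K]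
    {I : Finset ι} (hI : LinearIndependent K (I.restrict ∘ v)) (w : ι → K) :
    ∃ J ⊆ I, I ⊆ J ∪ ({j | w j ≠ 0} : Finset ι) ∧ LinearIndependent K (J.restrict ∘ v) ∧
      J.restrict w ∈ Submodule.span K (Set.range (J.restrict ∘ v)) := by
  classical
  set S : Finset ι := {j | w j ≠ 0}
  set T := {J ∈ I.powerset | I ⊆ J ∪ S ∧
    J.restrict w ∈ Submodule.span K (Set.range (J.restrict ∘ v))}
  have hT : I \ S ∈ T := by
    refine mem_filter.2 ⟨mem_powerset.2 sdiff_subset, by simp,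
      restrict_mem_span_restrict_comp_iff.2 ⟨0, ?_⟩⟩
    intro j hj
    have hwj : w j = 0 := by simpa [S] using (mem_sdiff.1 hj).2
    simp [hwj]
  obtain ⟨J, hJT, hmax⟩ := exists_max_image T card ⟨_, hT⟩
  obtain ⟨hJI, hIJ, hw⟩ := mem_filter.1 hJT
  refine ⟨J, mem_powerset.1 hJI, hIJ, ?_, hw⟩
  by_contra hJ
  obtain ⟨j, hjI, hjJ, hw'⟩ := exists_insert_restrict_mem_span hI hJ hw
  have hjT : insert j J ∈ T := mem_filter.2
    ⟨mem_powerset.2 (insert_subset hjI (mem_powerset.1 hJI)),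
      hIJ.trans (union_subset_union_left (subset_insert j J)), hw'⟩
  have := hmax _ hjT
  rw [card_insert_of_notMem hjJ] at this
  omega

end RestrictedRows

section Erasure

variable {K ι : Type*} [Field K] [Fintype ι] [DecidableEq ι] [DecidableEq K] {p : ℝ}

open scoped Classical in
theorem sum_erasureWeight_linearIndependent_snoc_le (hp0 : 0 ≤ p) (hp1 : p ≤ 1) {k : ℕ}
    (v : Fin k → ι → K) (w : ι → K) :
    ∑ I : Finset ι with LinearIndependent K (I.restrict ∘ Fin.snoc v w), erasureWeight p I ≤
      (1 - p ^ hammingNorm w) *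
        ∑ I : Finset ι with LinearIndependent K (I.restrict ∘ v), erasureWeight p I := by
  set A : Finset (Finset ι) := {I | LinearIndependent K (I.restrict ∘ v)}
  set P := fun I : Finset ι => I.restrict w ∈ Submodule.span K (Set.range (I.restrict ∘ v))
  have hsnoc : ({I | LinearIndependent K (I.restrict ∘ Fin.snoc v w)} : Finset (Finset ι)) =
      {I ∈ A | ¬P I} := by
    ext I
    simp [A, P, Fin.comp_snoc, linearIndependent_finSnoc]
  have hcompress : p ^ hammingNorm w * ∑ I ∈ A, erasureWeight p I ≤
      ∑ I ∈ A with P I, erasureWeight p I := by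
    refine pow_card_mul_sum_erasureWeight_le hp0 hp1 _ fun I hI => ?_
    obtain ⟨J, hJI, hIJ, hJ, hw⟩ :=
      exists_subset_linearIndependent_restrict_mem_span (mem_filter.1 hI).2 w
    exact ⟨J, by simp [A, P, hJ, hw], hJI, hIJ⟩
  rw [hsnoc]
  linarith [sum_filter_add_sum_filter_not A P (erasureWeight p)]

open scoped Classical in
theorem sum_erasureWeight_linearIndependent_le (hp0 : 0 ≤ p) (hp1 : p ≤ 1) {t : ℕ} :
    ∀ {k : ℕ} (v : Fin k → ι → K), (∀ i, hammingNorm (v i) ≤ t) →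
      ∑ I : Finset ι with LinearIndependent K (I.restrict ∘ v), erasureWeight p I ≤
        (1 - p ^ t) ^ k
  | 0, v, _ => by
    rw [pow_zero, ← sum_erasureWeight (ι := ι) p]
    exact sum_le_sum_of_subset_of_nonneg (filter_subset _ _)
      fun I _ _ => erasureWeight_nonneg hp0 hp1 I
  | k + 1, v, hv => by
    rw [← Fin.snoc_init_self v]
    calc _ ≤ (1 - p ^ hammingNorm (v (Fin.last k))) *
          ∑ I : Finset ι with LinearIndependent K (I.restrict ∘ Fin.init v), erasureWeight p I :=
          sum_erasureWeight_linearIndependent_snoc_le hp0 hp1 _ _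
      _ ≤ (1 - p ^ t) * (1 - p ^ t) ^ k := by
          refine mul_le_mul ?_ (sum_erasureWeight_linearIndependent_le hp0 hp1 _
            fun i => hv i.castSucc) (sum_nonneg fun I _ => erasureWeight_nonneg hp0 hp1 I)
            (sub_nonneg.2 (pow_le_one₀ hp0 hp1))
          exact sub_le_sub_left (pow_le_pow_of_le_one hp0 hp1 (hv _)) 1
      _ = (1 - p ^ t) ^ (k + 1) := (pow_succ' _ _).symm

end Erasure

theorem Matrix.rank_eq_card_iff_linearIndependent_row {m n R : Type*} [Field R] [Fintype m]
    [Fintype n] (A : Matrix m n R) : A.rank = Fintype.card m ↔ LinearIndependent R A.row := by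
  rw [A.rank_eq_finrank_span_row, linearIndependent_iff_card_eq_finrank_span, Set.finrank, eq_comm]

theorem one_sub_pow_lt_exp {q : ℝ} (hq0 : 0 < q) (hq1 : q ≤ 1) {k n : ℕ} (hk : 1 ≤ k)
    (hkn : k ≤ n) : (1 - q) ^ k < Real.exp (-((k : ℝ) ^ 2 * q ^ 2) / (2 * n)) := by
  have hk' : (1 : ℝ) ≤ k := by exact_mod_cast hk
  have hkn' : (k : ℝ) ≤ n := by exact_mod_cast hkn
  calc (1 - q) ^ k ≤ Real.exp (-q) ^ k :=
        pow_le_pow_left₀ (sub_nonneg.2 hq1) (by linarith [Real.add_one_le_exp (-q)]) k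
    _ = Real.exp (-(k * q)) := by rw [← Real.exp_nat_mul, mul_neg]
    _ < Real.exp (-((k : ℝ) ^ 2 * q ^ 2) / (2 * n)) := by
        rw [Real.exp_lt_exp, neg_div, neg_lt_neg_iff, div_lt_iff₀ (by linarith)]
        have hkq : (k : ℝ) * q ≤ n := by nlinarith
        have hkq0 : 0 < (k : ℝ) * q := by positivity
        nlinarith [mul_le_mul_of_nonneg_left hkq hkq0.le]

/-- if every row of the `k × n` matrix `G` over F₂ (`k ≥ 1`) has Hamming
weight at most `t`, and `I` is a random subset of the columns keeping each column
independently with probability `1−p`, then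
`Pr(rank(G_I) = k) < exp(−k² p^{2t}/(2n))`. -/
theorem stmt_7 {k n t : ℕ} (hk : 1 ≤ k) (p : ℝ) (hp0 : 0 < p) (hp1 : p < 1)
    (G : Matrix (Fin k) (Fin n) (ZMod 2))
    (hrow : ∀ i, hammingNorm (G i) ≤ t) :
    ∑ I : Finset (Fin n), ((1 - p) ^ I.card * p ^ (n - I.card)) *
        (if (G.submatrix id (fun j : ↥I => (j : Fin n))).rank = k then 1 else 0)
      < Real.exp (-((k : ℝ) ^ 2 * p ^ (2 * t)) / (2 * n)) := by
  classical
  have hrank (I : Finset (Fin n)) : (G.submatrix id (fun j : ↥I => (j : Fin n))).rank = k ↔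
      LinearIndependent (ZMod 2) (I.restrict ∘ G) := by
    have h := (G.submatrix id (fun j : ↥I => (j : Fin n))).rank_eq_card_iff_linearIndependent_row
    rw [Fintype.card_fin] at h
    exact h
  have hprob : ∑ I : Finset (Fin n), ((1 - p) ^ I.card * p ^ (n - I.card)) *
        (if (G.submatrix id (fun j : ↥I => (j : Fin n))).rank = k then 1 else 0) =
      ∑ I with LinearIndependent (ZMod 2) (I.restrict ∘ G), erasureWeight p I := by
    rw [sum_filter]
    exact sum_congr rfl fun I _ => by simp [hrank, erasureWeight]
  rw [hprob]
  rcases le_or_gt k n with hkn | hnk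
  · calc _ ≤ (1 - p ^ t) ^ k := sum_erasureWeight_linearIndependent_le hp0.le hp1.le G hrow
      _ < _ := by
        rw [pow_mul']
        exact one_sub_pow_lt_exp (pow_pos hp0 t) (pow_le_one₀ hp0.le hp1.le) hk hkn
  · have hdep (I : Finset (Fin n)) : ¬LinearIndependent (ZMod 2) (I.restrict ∘ G) := fun hI => by
      have hkI := card_le_of_linearIndependent_restrict_comp hI
      have hIn := card_le_univ I
      simp only [Fintype.card_fin] at hkI hIn
      omega
    simp [hdep, Real.exp_pos]
end

section
/- Let p ∈ (0,1) and ε ∈ (0,1). Let G be a k×n matrix over F₂ (k ≥ 1) every row of which has Hamming weight at most t, and let φ(x) = xᵀG be the associated linear encoding. Suppose t < ln(k²/(2n·ln(1/ε))) / (2·ln(1/p)). Then for every decoder ψ mapping a pair (I, restriction of the received codeword to I) to an element of F₂ᵏ, the average error probability of (φ, ψ) over BEC(p) is at least 1/2 − ε. -/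
/-!
Let `d I` be the dimension of the space of messages `c` with `(c G)|_I = 0`. When `d I > 0`,
a nonzero such `c` makes `x` and `x + c` indistinguishable from the observation on `I`, so any
decoder errs on at least half of the messages. Every row of `G` whose support is entirely
erased contributes an independent vector to that space, hence `E d ≥ ∑ᵢ p ^ wt(Gᵢ) ≥ k pᵗ`.
Revealing one more coordinate changes `d` by at most one, so the bounded-differences
(McDiarmid) inequality gives `P(d = 0) ≤ exp (-(k pᵗ)² / (2n))`, which is at most `ε` by
the hypothesis on `t`.
-/

open Finset Real Module Matrix

lemma exp_mul_le_cosh_add_mul_sinh {u : ℝ} (hu : |u| ≤ 1) (l : ℝ) :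
    exp (l * u) ≤ cosh l + u * sinh l := by
  obtain ⟨hu₁, hu₂⟩ := abs_le.1 hu
  have h := convexOn_exp.2 (Set.mem_univ (-l)) (Set.mem_univ l)
    (show 0 ≤ (1 - u) / 2 by linarith) (show 0 ≤ (1 + u) / 2 by linarith) (by ring)
  simp only [smul_eq_mul] at h
  rw [show l * u = (1 - u) / 2 * -l + (1 + u) / 2 * l by ring, cosh_eq, sinh_eq]
  exact h.trans_eq (by ring)

lemma hoeffding_two_point {q x y : ℝ} (hq0 : 0 ≤ q) (hq1 : q ≤ 1) (hxy : |x - y| ≤ 1)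
    (l : ℝ) :
    q * exp (l * x) + (1 - q) * exp (l * y) ≤ exp (l ^ 2 / 2 + l * (q * x + (1 - q) * y)) := by
  set m := q * x + (1 - q) * y
  have hx : |x - m| ≤ 1 := by
    rw [show x - m = (1 - q) * (x - y) by ring, abs_mul, abs_of_nonneg (by linarith)]
    nlinarith [abs_nonneg (x - y)]
  have hy : |y - m| ≤ 1 := by
    rw [show y - m = q * -(x - y) by ring, abs_mul, abs_neg, abs_of_nonneg hq0]
    nlinarith [abs_nonneg (x - y)]
  have shift : ∀ z, exp (l * z) = exp (l * (z - m)) * exp (l * m) := fun z => by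
    rw [← exp_add]; ring_nf
  calc q * exp (l * x) + (1 - q) * exp (l * y)
      = (q * exp (l * (x - m)) + (1 - q) * exp (l * (y - m))) * exp (l * m) := by
        rw [shift x, shift y]; ring
    _ ≤ (q * (cosh l + (x - m) * sinh l) + (1 - q) * (cosh l + (y - m) * sinh l)) *
          exp (l * m) := by
        have hq' : 0 ≤ 1 - q := by linarith
        gcongr
        · exact exp_mul_le_cosh_add_mul_sinh hx l
        · exact exp_mul_le_cosh_add_mul_sinh hy l
    _ = cosh l * exp (l * m) := by ring
    _ ≤ exp (l ^ 2 / 2) * exp (l * m) := by gcongr; exact cosh_le_exp_half_sq l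
    _ = exp (l ^ 2 / 2 + l * m) := (exp_add _ _).symm

section UnerasedExpect

variable {α : Type*} {p : ℝ}

/-- Expectation over the random set `A ⊆ J` of unerased coordinates, each coordinate of `J`
surviving independently with probability `1 - p`. -/
def unerasedExpect (p : ℝ) (J : Finset α) : (Finset α → ℝ) →ₗ[ℝ] ℝ where
  toFun g := ∑ A ∈ J.powerset, (1 - p) ^ A.card * p ^ (J.card - A.card) * g A
  map_add' g h := by simp only [Pi.add_apply, mul_add, sum_add_distrib]
  map_smul' c g := by
    simp only [Pi.smul_apply, smul_eq_mul, RingHom.id_apply, mul_sum]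
    exact sum_congr rfl fun A _ => by ring

lemma unerasedExpect_univ [Fintype α] (g : Finset α → ℝ) :
    unerasedExpect p univ g = ∑ A, (1 - p) ^ A.card * p ^ (Fintype.card α - A.card) * g A := by
  simp [unerasedExpect, powerset_univ]

lemma unerasedExpect_insert [DecidableEq α] {J : Finset α} {a : α} (ha : a ∉ J)
    (g : Finset α → ℝ) :
    unerasedExpect p (insert a J) g =
      unerasedExpect p J (fun A => p * g A + (1 - p) * g (insert a A)) := by
  simp only [unerasedExpect, LinearMap.coe_mk, AddHom.coe_mk, sum_powerset_insert ha,
    ← sum_add_distrib, card_insert_of_notMem ha]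
  refine sum_congr rfl fun A hA => ?_
  have hAJ : A.card ≤ J.card := card_le_card (mem_powerset.1 hA)
  have haA : a ∉ A := fun h => ha (mem_powerset.1 hA h)
  rw [card_insert_of_notMem haA, show J.card + 1 - A.card = J.card - A.card + 1 by omega,
    show J.card + 1 - (A.card + 1) = J.card - A.card by omega]
  ring

lemma unerasedExpect_mono (hp0 : 0 ≤ p) (hp1 : p ≤ 1) {J : Finset α} {g h : Finset α → ℝ}
    (hgh : ∀ A, g A ≤ h A) : unerasedExpect p J g ≤ unerasedExpect p J h :=
  sum_le_sum fun A _ =>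
    mul_le_mul_of_nonneg_left (hgh A) (by have := sub_nonneg.2 hp1; positivity)

lemma unerasedExpect_const (J : Finset α) (c : ℝ) : unerasedExpect p J (fun _ => c) = c := by
  classical
  induction J using Finset.induction_on with
  | empty => simp [unerasedExpect]
  | insert a J ha ih =>
    simpa only [unerasedExpect_insert ha, show p * c + (1 - p) * c = c by ring] using ih

lemma unerasedExpect_indicator_disjoint [DecidableEq α] (J S : Finset α) :
    unerasedExpect p J (fun A => if Disjoint A S then 1 else 0) = p ^ (J ∩ S).card := by
  induction J using Finset.induction_on with
  | empty => simp [unerasedExpect]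
  | insert a J ha ih =>
    rw [unerasedExpect_insert ha]
    by_cases haS : a ∈ S
    · rw [insert_inter_of_mem haS, card_insert_of_notMem fun h => ha (mem_inter.1 h).1, pow_succ,
        ← ih, mul_comm, ← smul_eq_mul, ← map_smul]
      congr 1; funext A
      simp [disjoint_insert_left, haS]
    · rw [insert_inter_of_notMem haS, ← ih]
      congr 1; funext A
      simp only [disjoint_insert_left, haS, not_false_eq_true, true_and]
      ring

lemma unerasedExpect_exp_le [DecidableEq α] (hp0 : 0 ≤ p) (hp1 : p ≤ 1) {f : Finset α → ℝ}
    (hf : ∀ A j, |f (insert j A) - f A| ≤ 1) (l : ℝ) (J : Finset α) :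
    unerasedExpect p J (fun A => exp (l * f A)) ≤
      exp (J.card * (l ^ 2 / 2) + l * unerasedExpect p J f) := by
  induction J using Finset.induction_on generalizing f with
  | empty => simp [unerasedExpect]
  | insert a J ha ih =>
    -- revealing the coordinate `a` first replaces `f` by its average `F` over that coordinate
    set F : Finset α → ℝ := fun A => p * f A + (1 - p) * f (insert a A)
    have hF : ∀ A j, |F (insert j A) - F A| ≤ 1 := by
      intro A j
      have h₁ := abs_le.1 (hf A j)
      have h₂ := abs_le.1 (hf (insert a A) j)
      rw [insert_comm] at h₂
      refine abs_le.2 ⟨?_, ?_⟩ <;> simp only [F] <;> nlinarith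
    rw [unerasedExpect_insert ha, unerasedExpect_insert ha, card_insert_of_notMem ha]
    calc unerasedExpect p J (fun A => p * exp (l * f A) + (1 - p) * exp (l * f (insert a A)))
        ≤ unerasedExpect p J (fun A => exp (l ^ 2 / 2) * exp (l * F A)) :=
          unerasedExpect_mono hp0 hp1 fun A => by
            rw [← exp_add]
            exact hoeffding_two_point hp0 hp1 (by rw [abs_sub_comm]; exact hf A a) l
      _ = exp (l ^ 2 / 2) * unerasedExpect p J (fun A => exp (l * F A)) := by
          rw [← smul_eq_mul, ← map_smul]; rfl
      _ ≤ exp (l ^ 2 / 2) * exp (J.card * (l ^ 2 / 2) + l * unerasedExpect p J F) := by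
          gcongr; exact ih hF
      _ = exp (↑(J.card + 1) * (l ^ 2 / 2) + l * unerasedExpect p J F) := by
          rw [← exp_add]; push_cast; ring_nf

lemma unerasedExpect_indicator_nonpos_le [DecidableEq α] (hp0 : 0 ≤ p) (hp1 : p ≤ 1)
    {f : Finset α → ℝ} (hf : ∀ A j, |f (insert j A) - f A| ≤ 1) (J : Finset α)
    (hμ : 0 ≤ unerasedExpect p J f) :
    unerasedExpect p J (fun A => if f A ≤ 0 then 1 else 0) ≤
      exp (-unerasedExpect p J f ^ 2 / (2 * J.card)) := by
  set μ := unerasedExpect p J f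
  -- Chernoff bound with the optimal parameter
  set l := -μ / J.card
  have hl : l ≤ 0 := div_nonpos_of_nonpos_of_nonneg (neg_nonpos.2 hμ) (Nat.cast_nonneg _)
  calc unerasedExpect p J (fun A => if f A ≤ 0 then 1 else 0)
      ≤ unerasedExpect p J (fun A => exp (l * f A)) := unerasedExpect_mono hp0 hp1 fun A => by
        split_ifs with h
        · exact one_le_exp (mul_nonneg_of_nonpos_of_nonpos hl h)
        · exact (exp_pos _).le
    _ ≤ exp (J.card * (l ^ 2 / 2) + l * μ) := unerasedExpect_exp_le hp0 hp1 hf l J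
    _ = exp (-μ ^ 2 / (2 * J.card)) := by
        rcases eq_or_ne (J.card : ℝ) 0 with h | h
        · simp [l, h]
        · congr 1; simp only [l]; field_simp; ring

end UnerasedExpect

lemma finrank_le_finrank_inf_ker_add_one {K V : Type*} [Field K] [AddCommGroup V] [Module K V]
    [FiniteDimensional K V] (A : Submodule K V) (ℓ : V →ₗ[K] K) :
    finrank K A ≤ finrank K ↥(A ⊓ LinearMap.ker ℓ) + 1 := by
  have hsup := Submodule.finrank_sup_add_finrank_inf_eq A (LinearMap.ker ℓ)
  have hrange := LinearMap.finrank_range_add_finrank_ker ℓ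
  have h₁ : finrank K ↥(A ⊔ LinearMap.ker ℓ) ≤ finrank K V := Submodule.finrank_le _
  have h₂ : finrank K (LinearMap.range ℓ) ≤ 1 :=
    (Submodule.finrank_le _).trans_eq (finrank_self K)
  omega

lemma card_le_two_mul_card_misdecoded {V W : Type*} [AddGroup V] [Fintype V] [DecidableEq V]
    (obs : V → W) (ψ : W → V) {c : V} (hc : c ≠ 0) (hobs : ∀ x, obs (x + c) = obs x) :
    Fintype.card V ≤ 2 * #{x | ψ (obs x) ≠ x} := by
  have hcorrect : #{x | ψ (obs x) = x} ≤ #{x | ψ (obs x) ≠ x} := by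
    refine card_le_card_of_injOn (· + c) (fun x hx => ?_) (fun x _ y _ h => add_right_cancel h)
    simp only [mem_coe, mem_filter, mem_univ, true_and] at hx ⊢
    rw [hobs, hx]
    simpa using hc
  have := card_filter_add_card_filter_not (s := univ) (fun x => ψ (obs x) = x)
  rw [card_univ] at this
  simp only [← ne_eq] at this
  omega

section RestrictedEncoding

variable {F : Type*} [Field F] {m n : Type*} [Fintype m] (G : Matrix m n F) {p : ℝ}

noncomputable def restrictedEncoding (I : Finset n) : (m → F) →ₗ[F] (I → F) :=
  LinearMap.funLeft F F Subtype.val ∘ₗ G.vecMulLinear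

noncomputable def ambiguityDim (I : Finset n) : ℕ :=
  finrank F (LinearMap.ker (restrictedEncoding G I))

lemma mem_ker_restrictedEncoding {I : Finset n} {x : m → F} :
    x ∈ LinearMap.ker (restrictedEncoding G I) ↔ ∀ j ∈ I, (x ᵥ* G) j = 0 := by
  simp [restrictedEncoding, funext_iff, LinearMap.funLeft]

lemma ambiguityDim_antitone : Antitone (ambiguityDim G) := fun _ _ hII' =>
  Submodule.finrank_mono fun _ hx => (mem_ker_restrictedEncoding G).2 fun j hj =>
    (mem_ker_restrictedEncoding G).1 hx j (hII' hj)

lemma ambiguityDim_le_ambiguityDim_insert_add_one [DecidableEq n] (I : Finset n) (j : n) :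
    ambiguityDim G I ≤ ambiguityDim G (insert j I) + 1 := by
  have hker : LinearMap.ker (restrictedEncoding G (insert j I)) =
      LinearMap.ker (restrictedEncoding G I) ⊓
        LinearMap.ker (LinearMap.proj j ∘ₗ G.vecMulLinear) := by
    ext x
    rw [Submodule.mem_inf, mem_ker_restrictedEncoding, mem_ker_restrictedEncoding,
      forall_mem_insert, and_comm]
    simp
  rw [ambiguityDim, ambiguityDim, hker]
  exact finrank_le_finrank_inf_ker_add_one _ _

lemma abs_ambiguityDim_insert_sub_le [DecidableEq n] (I : Finset n) (j : n) :
    |(ambiguityDim G (insert j I) : ℝ) - ambiguityDim G I| ≤ 1 := by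
  have h₁ := ambiguityDim_antitone G (subset_insert j I)
  have h₂ := ambiguityDim_le_ambiguityDim_insert_add_one G I j
  rw [← Nat.cast_le (α := ℝ)] at h₁ h₂
  push_cast at h₂
  exact abs_le.2 ⟨by linarith, by linarith⟩

lemma card_zero_rows_le_ambiguityDim [DecidableEq m] [DecidableEq F] (I : Finset n) :
    #{i | ∀ j ∈ I, G.row i j = 0} ≤ ambiguityDim G I := by
  set Z : Finset m := {i | ∀ j ∈ I, G.row i j = 0}
  let e : Z → LinearMap.ker (restrictedEncoding G I) := fun i =>
    ⟨Pi.single (i : m) 1, (mem_ker_restrictedEncoding G).2 fun j hj => by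
      rw [single_one_vecMul]; exact (mem_filter.1 i.2).2 j hj⟩
  have hcomp : (LinearMap.ker (restrictedEncoding G I)).subtype ∘ e =
      Pi.basisFun F m ∘ Subtype.val := by
    ext i : 1; simp [e]
  have he : LinearIndependent F e := LinearIndependent.of_comp (LinearMap.ker _).subtype <| by
    rw [hcomp]; exact (Pi.basisFun F m).linearIndependent.comp _ Subtype.val_injective
  have := he.fintype_card_le_finrank
  rwa [Fintype.card_coe] at this

lemma card_le_two_mul_card_misdecoded_of_ambiguityDim_pos [Fintype F] [DecidableEq m]
    [DecidableEq F] {I : Finset n} (hI : 0 < ambiguityDim G I) (ψ : (I → F) → (m → F)) :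
    Fintype.card (m → F) ≤ 2 * #{x | ψ (restrictedEncoding G I x) ≠ x} := by
  obtain ⟨c, hc, hc0⟩ := Submodule.ne_bot_iff _ |>.1 (Submodule.one_le_finrank_iff.1 hI)
  exact card_le_two_mul_card_misdecoded _ ψ hc0 fun x => by
    rw [map_add, LinearMap.mem_ker.1 hc, add_zero]

lemma sum_pow_hammingNorm_le_unerasedExpect_ambiguityDim [Fintype n] [DecidableEq m]
    [DecidableEq n] [DecidableEq F] (hp0 : 0 ≤ p) (hp1 : p ≤ 1) :
    ∑ i, p ^ hammingNorm (G i) ≤ unerasedExpect p univ (fun I => (ambiguityDim G I : ℝ)) := by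
  let erased (i : m) (A : Finset n) : ℝ :=
    if Disjoint A ({j | G i j ≠ 0} : Finset n) then 1 else 0
  calc ∑ i, p ^ hammingNorm (G i)
      = ∑ i, unerasedExpect p univ (erased i) := by
        simp only [erased, unerasedExpect_indicator_disjoint, univ_inter, hammingNorm]
    _ = unerasedExpect p univ (fun A => ∑ i, erased i A) := by
        rw [← map_sum]; congr 1; ext A; simp
    _ ≤ unerasedExpect p univ (fun I => (ambiguityDim G I : ℝ)) :=
        unerasedExpect_mono hp0 hp1 fun A => by
          rw [sum_boole, Nat.cast_le]
          refine (card_le_card fun i hi => ?_).trans (card_zero_rows_le_ambiguityDim G A)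
          simp only [mem_filter, mem_univ, true_and, disjoint_left] at hi ⊢
          simpa using hi

lemma le_avg_misdecoding [Fintype F] [DecidableEq m] [DecidableEq F] (hp0 : 0 ≤ p) (hp1 : p ≤ 1)
    (J : Finset n) (ψ : (I : Finset n) → (I → F) → (m → F)) :
    (1 - unerasedExpect p J (fun I => if (ambiguityDim G I : ℝ) ≤ 0 then 1 else 0)) / 2 ≤
      (Fintype.card (m → F) : ℝ)⁻¹ *
        ∑ x, unerasedExpect p J
          (fun I => if ψ I (restrictedEncoding G I x) ≠ x then 1 else 0) := by
  set N : ℝ := (Fintype.card (m → F) : ℝ)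
  set bad := fun I => if (ambiguityDim G I : ℝ) ≤ 0 then (1 : ℝ) else 0
  have hN : 0 < N := by positivity
  have hpointwise :
      ∀ I, N / 2 * (1 - bad I) ≤ #{x | ψ I (restrictedEncoding G I x) ≠ x} := by
    intro I
    by_cases hI : (ambiguityDim G I : ℝ) ≤ 0
    · simp [bad, Nat.cast_nonpos.1 hI]
    · have := card_le_two_mul_card_misdecoded_of_ambiguityDim_pos G
        (by exact_mod_cast not_le.1 hI) (ψ I)
      simp only [bad, hI, if_false, sub_zero, mul_one, N]
      rw [div_le_iff₀ two_pos]
      exact_mod_cast (by linarith : Fintype.card (m → F) ≤ _)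
  have hlin : unerasedExpect p J (fun I => N / 2 * (1 - bad I)) =
      N / 2 * (1 - unerasedExpect p J bad) := by
    rw [show (fun I => N / 2 * (1 - bad I)) = (N / 2) • ((fun _ => 1) - bad) from rfl, map_smul,
      map_sub, unerasedExpect_const, smul_eq_mul]
  rw [← map_sum]
  calc (1 - unerasedExpect p J bad) / 2
      = N⁻¹ * unerasedExpect p J (fun I => N / 2 * (1 - bad I)) := by rw [hlin]; field_simp
    _ ≤ _ := by
      gcongr
      exact unerasedExpect_mono hp0 hp1 fun I => by
        simpa only [Finset.sum_apply, sum_boole] using hpointwise I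

end RestrictedEncoding

lemma le_sq_div_of_lt_log_div {k n t : ℕ} {p L : ℝ} (hp0 : 0 < p) (hp1 : p < 1)
    (ht : (t : ℝ) < log (k ^ 2 / (2 * n * L)) / (2 * log (1 / p))) :
    L ≤ (k * p ^ t) ^ 2 / (2 * n) := by
  rcases le_or_gt L 0 with hL | hL
  · exact hL.trans (by positivity)
  have hlogp : 0 < log (1 / p) := log_pos (by rw [lt_div_iff₀ hp0]; linarith)
  set y : ℝ := k ^ 2 / (2 * n * L)
  have hlog : log ((1 / p) ^ (2 * t)) < log y := by
    rw [log_pow, lt_div_iff₀ (by positivity)] at *; push_cast; linarith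
  have hy : 1 < y := by
    rw [← log_pos_iff (by positivity)]
    exact (log_nonneg (one_le_pow₀ (by rw [le_div_iff₀ hp0]; linarith))).trans_lt hlog
  have hn : (n : ℝ) ≠ 0 := by
    rintro hn; rw [show y = 0 by simp [y, hn]] at hy; linarith
  have hlt : (1 / p) ^ (2 * t) < y := (log_lt_log_iff (by positivity) (by positivity)).1 hlog
  rw [div_pow, one_pow, div_lt_iff₀ (by positivity), div_mul_eq_mul_div,
    one_lt_div (by positivity)] at hlt
  rw [le_div_iff₀ (by positivity)]
  linarith [show (k * p ^ t) ^ 2 = k ^ 2 * p ^ (2 * t) by ring]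

theorem stmt_8_general {k n t : ℕ} (p ε : ℝ) (hp0 : 0 < p) (hp1 : p < 1) (hε0 : 0 < ε)
    (G : Matrix (Fin k) (Fin n) (ZMod 2))
    (hrow : ∀ i, hammingNorm (G i) ≤ t)
    (ht : (t : ℝ) <
      Real.log ((k : ℝ) ^ 2 / (2 * n * Real.log (1 / ε))) / (2 * Real.log (1 / p)))
    (ψ : (I : Finset (Fin n)) → (↥I → ZMod 2) → (Fin k → ZMod 2)) :
    1 / 2 - ε ≤
      (2 : ℝ) ^ (-(k : ℝ)) * ∑ x : Fin k → ZMod 2,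
        ∑ I : Finset (Fin n), ((1 - p) ^ I.card * p ^ (n - I.card)) *
          (if ψ I (fun j => Matrix.vecMul x G (j : Fin n)) ≠ x then 1 else 0) := by
  set μ := unerasedExpect p univ (fun I => (ambiguityDim G I : ℝ))
  have hμ : k * p ^ t ≤ μ := calc
    k * p ^ t = ∑ _ : Fin k, p ^ t := by simp
    _ ≤ ∑ i, p ^ hammingNorm (G i) :=
      sum_le_sum fun i _ => pow_le_pow_of_le_one hp0.le hp1.le (hrow i)
    _ ≤ μ := sum_pow_hammingNorm_le_unerasedExpect_ambiguityDim G hp0.le hp1.le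
  set bad := unerasedExpect p univ (fun I => if (ambiguityDim G I : ℝ) ≤ 0 then 1 else 0)
  have hbad : bad ≤ ε := calc
    _ ≤ exp (-μ ^ 2 / (2 * n)) := by
      refine (unerasedExpect_indicator_nonpos_le hp0.le hp1.le (abs_ambiguityDim_insert_sub_le G)
        univ ((by positivity : (0 : ℝ) ≤ k * p ^ t).trans hμ)).trans_eq ?_
      rw [card_univ, Fintype.card_fin]
    _ ≤ exp (-log (1 / ε)) := by
      gcongr
      rw [neg_div, neg_le_neg_iff]
      exact (le_sq_div_of_lt_log_div hp0 hp1 ht).trans (by gcongr)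
    _ = ε := by rw [one_div, log_inv, neg_neg, exp_log hε0]
  calc 1 / 2 - ε ≤ (1 - bad) / 2 := by linarith
    _ ≤ _ := le_avg_misdecoding G hp0.le hp1.le univ ψ
    _ = _ := by
      rw [show (Fintype.card (Fin k → ZMod 2) : ℝ)⁻¹ = 2 ^ (-(k : ℝ)) by simp [rpow_neg]]
      simp only [unerasedExpect_univ, Fintype.card_fin]
      rfl

/-- a linear code over BEC(p) whose generator matrix `G` has all row weights
at most `t` with `t < ln(k²/(2n ln(1/ε))) / (2 ln(1/p))` has average error probability at
least `1/2 − ε` under any decoder (which observes the set `I` of unerased coordinates and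
the codeword restricted to `I`). -/
theorem stmt_8 {k n t : ℕ} (hk : 1 ≤ k) (p ε : ℝ) (hp0 : 0 < p) (hp1 : p < 1)
    (hε0 : 0 < ε) (hε1 : ε < 1)
    (G : Matrix (Fin k) (Fin n) (ZMod 2))
    (hrow : ∀ i, hammingNorm (G i) ≤ t)
    (ht : (t : ℝ) <
      Real.log ((k : ℝ) ^ 2 / (2 * n * Real.log (1 / ε))) / (2 * Real.log (1 / p)))
    (ψ : (I : Finset (Fin n)) → (↥I → ZMod 2) → (Fin k → ZMod 2)) :
    1 / 2 - ε ≤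
      (2 : ℝ) ^ (-(k : ℝ)) * ∑ x : Fin k → ZMod 2,
        ∑ I : Finset (Fin n), ((1 - p) ^ I.card * p ^ (n - I.card)) *
          (if ψ I (fun j => Matrix.vecMul x G (j : Fin n)) ≠ x then 1 else 0) :=
  stmt_8_general p ε hp0 hp1 hε0 G hrow ht ψ
end

section
/- Let x₁, …, x_M ∈ F₂ⁿ be M ≥ 1 distinct vectors all contained in a Hamming ball of radius t, i.e., there is z ∈ F₂ⁿ with d_H(x_i, z) ≤ t for all i. Let w, t be nonnegative integers with w + t ≤ n/2, and let e be a uniformly random vector in F₂ⁿ of Hamming weight exactly w. Then for every decoder ψ : F₂ⁿ → {1,…,M}, the average probability of correct decoding satisfies (1/M)·Σ_{i=1}^{M} Pr(ψ(x_i + e) = i) ≤ (2t+1)·C(n, w+t) / (M·C(n, w)), where C(n, w) denotes the binomial coefficient n choose w. -/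
/-!
Translating the weight-`w` error patterns that the decoder maps back to `i` by `xᵢ` gives
pairwise disjoint sets (they lie in different fibres of `ψ`). Since every `xᵢ` is within
distance `t` of `z`, all of them lie in the annulus `w - t ≤ d(y, z) ≤ w + t`, which consists of
at most `2t + 1` spheres of size `C(n, k) ≤ C(n, w + t)`, binomial coefficients increasing up to
`n / 2`.
-/

open Finset

theorem Nat.choose_le_choose_of_le_half {n k m : ℕ} (hkm : k ≤ m) (hm : m ≤ n / 2) :
    n.choose k ≤ n.choose m := by
  induction m, hkm using Nat.le_induction with
  | base => rfl
  | succ m _ ih => exact (ih (by omega)).trans (Nat.choose_le_succ_of_lt_half_left (by omega))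

theorem sum_card_decoded_le {G ι : Type*} [Fintype G] [Add G] [IsLeftCancelAdd G]
    [Fintype ι] [DecidableEq ι] (ψ : G → ι) (x : ι → G) (p : G → Prop) [DecidablePred p]
    (A : Finset G) (hA : ∀ i e, p e → x i + e ∈ A) :
    ∑ i, #{e | p e ∧ ψ (x i + e) = i} ≤ #A :=
  calc ∑ i, #{e | p e ∧ ψ (x i + e) = i}
      ≤ ∑ i, #{y ∈ A | ψ y = i} := by
        refine sum_le_sum fun i _ =>
          card_le_card_of_injOn (x i + ·) (fun e he => ?_) (add_right_injective _).injOn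
        simp only [coe_filter, mem_univ, true_and, Set.mem_ofPred_eq] at he ⊢
        exact ⟨hA i e he.1, he.2⟩
    _ = #A := (card_eq_sum_card_fiberwise fun _ _ => mem_univ _).symm

theorem hammingDist_add_mem_Icc {ι β : Type*} [Fintype ι] [AddGroup β] [DecidableEq β]
    {x e z : ι → β} {w t : ℕ} (he : hammingNorm e = w) (hx : hammingDist x z ≤ t) :
    hammingDist (x + e) z ∈ Icc (w - t) (w + t) := by
  have hxe : hammingDist x (x + e) = w := by
    rw [hammingDist_eq_hammingNorm, neg_add_cancel_left, he]
  have lower := hammingDist_triangle x z (x + e)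
  have upper := hammingDist_triangle (x + e) x z
  rw [hammingDist_comm z] at lower
  rw [hammingDist_comm (x + e) x] at upper
  rw [mem_Icc]
  omega

section BinaryHammingSpace

variable {ι : Type*} [Fintype ι] [DecidableEq ι]

theorem card_hammingNorm_eq (k : ℕ) :
    #{e : ι → ZMod 2 | hammingNorm e = k} = (Fintype.card ι).choose k := by
  rw [← card_univ, ← card_powersetCard]
  refine card_nbij' (fun e => ({i | e i ≠ 0} : Finset ι)) (fun s i => if i ∈ s then 1 else 0)
    ?_ ?_ ?_ ?_
  · intro e he
    simpa [hammingNorm] using he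
  · intro s hs
    simpa [hammingNorm] using hs
  · intro e _
    funext i
    have eq_one_of_ne_zero : ∀ a : ZMod 2, a ≠ 0 → a = 1 := by decide
    by_cases h : e i = 0 <;> simp [h, eq_one_of_ne_zero]
  · intro s _
    ext i
    by_cases h : i ∈ s <;> simp [h]

theorem card_hammingDist_eq (z : ι → ZMod 2) (k : ℕ) :
    #{y | hammingDist y z = k} = (Fintype.card ι).choose k := by
  rw [← card_hammingNorm_eq k]
  simp_rw [hammingDist_comm _ z, hammingDist_eq_hammingNorm]
  refine card_nbij' (-z + ·) (z + ·) ?_ ?_ ?_ ?_ <;> intro y hy <;> simp_all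

theorem card_hammingDist_mem_Icc_le (z : ι → ZMod 2) {w t : ℕ}
    (h : w + t ≤ Fintype.card ι / 2) :
    #{y | hammingDist y z ∈ Icc (w - t) (w + t)}
      ≤ (2 * t + 1) * (Fintype.card ι).choose (w + t) := by
  rw [card_eq_sum_card_fiberwise (f := (hammingDist · z)) (t := Icc (w - t) (w + t))
    fun y hy => by simpa using hy]
  calc ∑ k ∈ Icc (w - t) (w + t), #{y ∈ {y | hammingDist y z ∈ Icc (w - t) (w + t)} |
          hammingDist y z = k}
      ≤ ∑ k ∈ Icc (w - t) (w + t), (Fintype.card ι).choose (w + t) := by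
        refine sum_le_sum fun k hk => ?_
        rw [mem_Icc] at hk
        calc _ ≤ #{y | hammingDist y z = k} :=
              card_le_card (filter_subset_filter _ (subset_univ _))
          _ = (Fintype.card ι).choose k := card_hammingDist_eq z k
          _ ≤ _ := Nat.choose_le_choose_of_le_half hk.2 h
    _ ≤ (2 * t + 1) * (Fintype.card ι).choose (w + t) := by
        rw [sum_const, smul_eq_mul, Nat.card_Icc]
        gcongr
        omega

end BinaryHammingSpace

theorem stmt_9_general {n M w t : ℕ}
    (x : Fin M → (Fin n → ZMod 2))
    (z : Fin n → ZMod 2) (hball : ∀ i, hammingDist (x i) z ≤ t)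
    (hwt : 2 * (w + t) ≤ n)
    (ψ : (Fin n → ZMod 2) → Fin M) :
    (1 / (M : ℝ)) * ∑ i : Fin M,
        ((Finset.univ.filter fun e : Fin n → ZMod 2 =>
            hammingNorm e = w ∧ ψ (x i + e) = i).card : ℝ) / (n.choose w : ℝ)
      ≤ ((2 * (t : ℝ) + 1) * (n.choose (w + t) : ℝ)) / ((M : ℝ) * (n.choose w : ℝ)) := by
  have hcount : ∑ i, #{e : Fin n → ZMod 2 | hammingNorm e = w ∧ ψ (x i + e) = i}
      ≤ (2 * t + 1) * n.choose (w + t) :=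
    calc _ ≤ #{y : Fin n → ZMod 2 | hammingDist y z ∈ Icc (w - t) (w + t)} :=
          sum_card_decoded_le ψ x _ _ fun i _ he => by
            simpa using hammingDist_add_mem_Icc he (hball i)
      _ ≤ _ := by
          simpa using card_hammingDist_mem_Icc_le z (w := w) (t := t) (by simp; omega)
  rw [← sum_div, one_div, inv_mul_eq_div, div_div, mul_comm (n.choose w : ℝ)]
  gcongr
  exact_mod_cast hcount

/-- ball-packing bound: if `M ≥ 1` distinct vectors `x₁,…,x_M ∈ F₂ⁿ` lie in a
Hamming ball of radius `t`, `w + t ≤ n/2`, and the channel adds a uniformly random error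
vector of weight exactly `w`, then any decoder's average probability of correct decoding is
at most `(2t+1) C(n, w+t) / (M C(n, w))`. -/
theorem stmt_9 {n M w t : ℕ} (hM : 1 ≤ M)
    (x : Fin M → (Fin n → ZMod 2)) (hx : Function.Injective x)
    (z : Fin n → ZMod 2) (hball : ∀ i, hammingDist (x i) z ≤ t)
    (hwt : 2 * (w + t) ≤ n)
    (ψ : (Fin n → ZMod 2) → Fin M) :
    (1 / (M : ℝ)) * ∑ i : Fin M,
        ((Finset.univ.filter fun e : Fin n → ZMod 2 =>
            hammingNorm e = w ∧ ψ (x i + e) = i).card : ℝ) / (n.choose w : ℝ)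
      ≤ ((2 * (t : ℝ) + 1) * (n.choose (w + t) : ℝ)) / ((M : ℝ) * (n.choose w : ℝ)) :=
  stmt_9_general x z hball hwt ψ
end

section
/- Let 1 ≤ k < n, let φ : F₂ᵏ → F₂ⁿ be injective, and fix p ∈ (0,1). For a nonempty set A ⊆ F₂ᵏ of messages, define P(A) as the minimum over all decoders ψ : F₂ⁿ → F₂ᵏ of (1/|A|)·Σ_{m ∈ A} Pr(ψ(φ(m) + e) ≠ m), where e ∈ F₂ⁿ has i.i.d. coordinates equal to 1 with probability p. For each m ∈ F₂ᵏ let S_m = {m} ∪ {m + e_i : 1 ≤ i ≤ k}, where e_i are the standard basis vectors of F₂ᵏ. Then 2^{−k}·Σ_{m ∈ F₂ᵏ} P(S_m) ≤ (n/(k+1))·P(F₂ᵏ); equivalently, the average error probability of the full code under optimal decoding is at least ((k+1)/n) times the average over messages m of the optimal error probability of the subcode indexed by S_m. -/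
/-- Probability that BSC(p) produces the noise vector `e` (i.i.d. coordinates). -/
noncomputable def bscProb (p : ℝ) {n : ℕ} (e : Fin n → ZMod 2) : ℝ :=
  p ^ hammingNorm e * (1 - p) ^ (n - hammingNorm e)

/-- `optErr p φ A` is the minimum, over all decoders `ψ`, of the average error probability
over BSC(p) when a uniformly random message from `A` is encoded by `φ`. -/
noncomputable def optErr {k n : ℕ} (p : ℝ) (φ : (Fin k → ZMod 2) → (Fin n → ZMod 2))
    (A : Finset (Fin k → ZMod 2)) : ℝ :=
  ⨅ ψ : (Fin n → ZMod 2) → (Fin k → ZMod 2),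
    (1 / (A.card : ℝ)) * ∑ m ∈ A, ∑ e : Fin n → ZMod 2,
      bscProb p e * (if ψ (φ m + e) ≠ m then 1 else 0)

/-- Error probability of message `m` under decoder `ψ`. -/
noncomputable def errP {k n : ℕ} (p : ℝ) (φ : (Fin k → ZMod 2) → (Fin n → ZMod 2))
    (ψ : (Fin n → ZMod 2) → (Fin k → ZMod 2)) (m : Fin k → ZMod 2) : ℝ :=
  ∑ e : Fin n → ZMod 2, bscProb p e * (if ψ (φ m + e) ≠ m then 1 else 0)

lemma optErr_le {k n : ℕ} (p : ℝ) (φ : (Fin k → ZMod 2) → (Fin n → ZMod 2))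
    (A : Finset (Fin k → ZMod 2)) (ψ : (Fin n → ZMod 2) → (Fin k → ZMod 2)) :
    optErr p φ A ≤ (1 / (A.card : ℝ)) * ∑ m ∈ A, errP p φ ψ m :=
  ciInf_le (Set.Finite.bddBelow (Set.finite_range _)) ψ

lemma errP_nonneg {k n : ℕ} {p : ℝ} (hp0 : 0 < p) (hp1 : p < 1)
    (φ : (Fin k → ZMod 2) → (Fin n → ZMod 2)) (ψ : (Fin n → ZMod 2) → (Fin k → ZMod 2))
    (m : Fin k → ZMod 2) : 0 ≤ errP p φ ψ m := by
  apply Finset.sum_nonneg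
  intro e _
  apply mul_nonneg
  · exact mul_nonneg (pow_nonneg hp0.le _) (pow_nonneg (by linarith) _)
  · split_ifs <;> norm_num

/-- with `S_m = {m} ∪ {m + eᵢ}` the subcode of the `k+1` messages within
Hamming distance 1 of `m`, the average over `m` of the optimal error probability of the
subcode `S_m` is at most `(n/(k+1))` times the optimal average error probability of the
full code. -/
theorem stmt_10 {k n : ℕ} (hk : 1 ≤ k) (hkn : k < n) (p : ℝ) (hp0 : 0 < p) (hp1 : p < 1)
    (φ : (Fin k → ZMod 2) → (Fin n → ZMod 2)) (hφ : Function.Injective φ) :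
    (2 : ℝ) ^ (-(k : ℝ)) * ∑ m : Fin k → ZMod 2,
        optErr p φ (insert m (Finset.univ.image fun i : Fin k => m + Pi.single i 1))
      ≤ ((n : ℝ) / ((k : ℝ) + 1)) * optErr p φ Finset.univ := by
  classical
  set S : (Fin k → ZMod 2) → Finset (Fin k → ZMod 2) :=
    fun m => insert m (Finset.univ.image fun i : Fin k => m + Pi.single i 1) with hS
  -- x + x = 0 in char 2
  have hself : ∀ x : Fin k → ZMod 2, x + x = 0 := by
    intro x; ext j; exact CharTwo.add_self_eq_zero _
  -- symmetry of membership
  have hmem : ∀ a b : Fin k → ZMod 2, a ∈ S b ↔ b ∈ S a := by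
    have key : ∀ a b : Fin k → ZMod 2, a ∈ S b → b ∈ S a := by
      intro a b hab
      simp only [hS, Finset.mem_insert, Finset.mem_image, Finset.mem_univ, true_and] at hab ⊢
      rcases hab with h | ⟨i, hi⟩
      · exact Or.inl h.symm
      · refine Or.inr ⟨i, ?_⟩
        rw [← hi, add_assoc, hself, add_zero]
    exact fun a b => ⟨key a b, key b a⟩
  -- cardinality of S m
  have hsingle_ne : ∀ i : Fin k, (Pi.single i 1 : Fin k → ZMod 2) ≠ 0 := by
    intro i h
    have := congrFun h i
    simp [Pi.single_eq_same] at this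
  have hinj : ∀ m : Fin k → ZMod 2, Function.Injective fun i : Fin k => m + Pi.single i 1 := by
    intro m i j h
    simp only at h
    have h2 : (Pi.single i 1 : Fin k → ZMod 2) = Pi.single j 1 := add_left_cancel h
    by_contra hne
    have := congrFun h2 i
    rw [Pi.single_eq_same, Pi.single_eq_of_ne hne] at this
    exact one_ne_zero this
  have hcard : ∀ m, (S m).card = k + 1 := by
    intro m
    rw [hS]
    rw [Finset.card_insert_of_notMem, Finset.card_image_of_injective _ (hinj m)]
    · simp
    · simp only [Finset.mem_image, Finset.mem_univ, true_and, not_exists]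
      intro i h
      apply hsingle_ne i
      have : m + Pi.single i 1 = m + 0 := by rw [add_zero]; exact h
      exact add_left_cancel this
  -- optimal global decoder
  obtain ⟨ψs, hψs⟩ := Finite.exists_min
    (fun ψ : (Fin n → ZMod 2) → (Fin k → ZMod 2) => ∑ m : Fin k → ZMod 2, errP p φ ψ m)
  set f : (Fin k → ZMod 2) → ℝ := errP p φ ψs with hf
  have hf0 : ∀ m, 0 ≤ f m := errP_nonneg hp0 hp1 φ ψs
  -- value of optErr on univ
  have hcardu : ((Finset.univ : Finset (Fin k → ZMod 2)).card : ℝ) = 2 ^ k := by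
    simp [Finset.card_univ]
  have hopt : optErr p φ Finset.univ = ((2 : ℝ) ^ k)⁻¹ * ∑ m : Fin k → ZMod 2, f m := by
    apply le_antisymm
    · have := optErr_le p φ Finset.univ ψs
      rwa [hcardu, one_div] at this
    · apply le_ciInf
      intro ψ
      rw [hcardu, one_div]
      have hpos : (0 : ℝ) ≤ ((2 : ℝ) ^ k)⁻¹ := by positivity
      exact mul_le_mul_of_nonneg_left (hψs ψ) hpos
  -- double counting
  have hswap : ∑ m : Fin k → ZMod 2, ∑ m' ∈ S m, f m'
      = ((k : ℝ) + 1) * ∑ m' : Fin k → ZMod 2, f m' := by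
    calc ∑ m : Fin k → ZMod 2, ∑ m' ∈ S m, f m'
        = ∑ m : Fin k → ZMod 2, ∑ m' : Fin k → ZMod 2, (if m' ∈ S m then f m' else 0) := by
          apply Finset.sum_congr rfl
          intro m _
          rw [Finset.sum_ite_mem, Finset.univ_inter]
      _ = ∑ m' : Fin k → ZMod 2, ∑ m : Fin k → ZMod 2, (if m' ∈ S m then f m' else 0) :=
          Finset.sum_comm
      _ = ∑ m' : Fin k → ZMod 2, ∑ m : Fin k → ZMod 2, (if m ∈ S m' then f m' else 0) := by
          apply Finset.sum_congr rfl; intro m' _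
          apply Finset.sum_congr rfl; intro m _
          exact if_congr (hmem m' m) rfl rfl
      _ = ∑ m' : Fin k → ZMod 2, ((S m').card : ℝ) * f m' := by
          apply Finset.sum_congr rfl; intro m' _
          rw [Finset.sum_ite_mem, Finset.univ_inter, Finset.sum_const, nsmul_eq_mul]
      _ = ((k : ℝ) + 1) * ∑ m' : Fin k → ZMod 2, f m' := by
          rw [Finset.mul_sum]
          apply Finset.sum_congr rfl; intro m' _
          rw [hcard]; push_cast; ring
  -- bound each subcode
  have hsub : ∀ m : Fin k → ZMod 2,
      optErr p φ (S m) ≤ (1 / ((k : ℝ) + 1)) * ∑ m' ∈ S m, f m' := by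
    intro m
    have := optErr_le p φ (S m) ψs
    rwa [hcard m, Nat.cast_add, Nat.cast_one] at this
  -- put it together
  have hpow : (2 : ℝ) ^ (-(k : ℝ)) = ((2 : ℝ) ^ k)⁻¹ := by
    rw [Real.rpow_neg (by norm_num), Real.rpow_natCast]
  have hpownn : (0 : ℝ) ≤ (2 : ℝ) ^ (-(k : ℝ)) := by rw [hpow]; positivity
  have step1 : (2 : ℝ) ^ (-(k : ℝ)) * ∑ m : Fin k → ZMod 2, optErr p φ (S m)
      ≤ (2 : ℝ) ^ (-(k : ℝ)) * ∑ m : Fin k → ZMod 2,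
          (1 / ((k : ℝ) + 1)) * ∑ m' ∈ S m, f m' := by
    apply mul_le_mul_of_nonneg_left _ hpownn
    exact Finset.sum_le_sum fun m _ => hsub m
  have step2 : (2 : ℝ) ^ (-(k : ℝ)) * ∑ m : Fin k → ZMod 2,
          (1 / ((k : ℝ) + 1)) * ∑ m' ∈ S m, f m'
      = optErr p φ Finset.univ := by
    rw [← Finset.mul_sum, hswap, hopt, hpow]
    have hk1 : ((k : ℝ) + 1) ≠ 0 := by positivity
    field_simp
  have hoptnn : 0 ≤ optErr p φ Finset.univ := by
    rw [hopt]
    exact mul_nonneg (by positivity) (Finset.sum_nonneg fun m _ => hf0 m)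
  have hfrac : (1 : ℝ) ≤ (n : ℝ) / ((k : ℝ) + 1) := by
    rw [le_div_iff₀ (by positivity)]
    have : (k : ℝ) + 1 ≤ n := by exact_mod_cast hkn
    linarith
  calc (2 : ℝ) ^ (-(k : ℝ)) * ∑ m : Fin k → ZMod 2, optErr p φ (S m)
      ≤ optErr p φ Finset.univ := step1.trans_eq step2
    _ ≤ ((n : ℝ) / ((k : ℝ) + 1)) * optErr p φ Finset.univ :=
        le_mul_of_one_le_left hoptnn hfrac
end

section
/- Fix p ∈ (0, 1/2), α ∈ (0, 1), and δ > 0. There exists k₀ such that for every integer k ≥ k₀, every n, every injective encoding φ : F₂ᵏ → F₂ⁿ with update-efficiency t satisfying t ≤ (1−α)·log₂ k / log₂((1−p)/p), and every decoder ψ : F₂ⁿ → F₂ᵏ, the average error probability 2^{−k}·Σ_{x ∈ F₂ᵏ} Pr(ψ(φ(x) + e) ≠ x) over BSC(p) is at least 1 − δ. -/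
open Finset

section BSC

variable {p : ℝ} {n : ℕ}

lemma bscProb_nonneg (hp0 : 0 ≤ p) (hp1 : p ≤ 1) (e : Fin n → ZMod 2) : 0 ≤ bscProb p e :=
  mul_nonneg (pow_nonneg hp0 _) (pow_nonneg (sub_nonneg.mpr hp1) _)

lemma bscProb_eq_prod (e : Fin n → ZMod 2) :
    bscProb p e = ∏ i, if e i = 0 then 1 - p else p := by
  have hcard : #{i | e i = 0} = n - hammingNorm e := by
    have := card_filter_add_card_filter_not (s := univ) (p := fun i => e i = 0)
    rw [card_univ, Fintype.card_fin] at this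
    simp only [hammingNorm, ne_eq]
    omega
  rw [prod_ite, prod_const, prod_const, hcard, bscProb, mul_comm]
  rfl

lemma sum_bscProb : ∑ e : Fin n → ZMod 2, bscProb p e = 1 := by
  have hbit : ∑ a : ZMod 2, (if a = 0 then 1 - p else p) = 1 := by
    rw [show (univ : Finset (ZMod 2)) = {0, 1} from rfl, sum_pair (by decide)]
    simp
  simp_rw [bscProb_eq_prod]
  rw [← Fintype.prod_sum (fun (_ : Fin n) (a : ZMod 2) => if a = 0 then 1 - p else p), hbit,
    prod_const_one]

lemma bscProb_eq_mul_pow (hp1 : p ≠ 1) (e : Fin n → ZMod 2) :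
    bscProb p e = (1 - p) ^ n * (p / (1 - p)) ^ hammingNorm e := by
  have hq : 1 - p ≠ 0 := sub_ne_zero.mpr hp1.symm
  have hw : hammingNorm e ≤ n := by simpa using hammingNorm_le_card_fintype (x := e)
  rw [bscProb, div_pow, ← pow_sub_mul_pow (1 - p) hw]
  field_simp

lemma pow_mul_bscProb_le (hp0 : 0 ≤ p) (hp : p ≤ 1 / 2) {u v : Fin n → ZMod 2} {t : ℕ}
    (h : hammingDist u v ≤ t) : (p / (1 - p)) ^ t * bscProb p u ≤ bscProb p v := by
  have hq : 0 < 1 - p := by linarith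
  have hγ0 : 0 ≤ p / (1 - p) := div_nonneg hp0 hq.le
  have hγ1 : p / (1 - p) ≤ 1 := (div_le_one hq).mpr (by linarith)
  have hnorm : hammingNorm v ≤ t + hammingNorm u := by
    rw [← hammingDist_zero_right, ← hammingDist_zero_right]
    exact (hammingDist_triangle v u 0).trans (by rw [hammingDist_comm]; omega)
  rw [bscProb_eq_mul_pow (by linarith), bscProb_eq_mul_pow (by linarith), mul_left_comm,
    ← pow_add]
  gcongr (1 - p) ^ n * ?_
  exact pow_le_pow_of_le_one hγ0 hγ1 hnorm

end BSC

section Decoding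

variable {p : ℝ} {n : ℕ} {M : Type*} [DecidableEq M]

noncomputable def decodeProb (p : ℝ) (ψ : (Fin n → ZMod 2) → M) (c : Fin n → ZMod 2) (m : M) :
    ℝ :=
  ∑ y, bscProb p (y - c) * if ψ y = m then 1 else 0

lemma decodeProb_nonneg (hp0 : 0 ≤ p) (hp1 : p ≤ 1) (ψ : (Fin n → ZMod 2) → M)
    (c : Fin n → ZMod 2) (m : M) : 0 ≤ decodeProb p ψ c m :=
  sum_nonneg fun _ _ => mul_nonneg (bscProb_nonneg hp0 hp1 _) (by positivity)

lemma decodeProb_eq_sum_bscProb (ψ : (Fin n → ZMod 2) → M) (c : Fin n → ZMod 2) (m : M) :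
    decodeProb p ψ c m = ∑ e, bscProb p e * if ψ (c + e) = m then 1 else 0 := by
  rw [decodeProb, ← Equiv.sum_comp (Equiv.addLeft c)]
  simp only [Equiv.coe_addLeft, add_sub_cancel_left]
  rfl

lemma sum_bscProb_mul_ne_eq (ψ : (Fin n → ZMod 2) → M) (c : Fin n → ZMod 2) (m : M) :
    ∑ e, bscProb p e * (if ψ (c + e) ≠ m then 1 else 0) = 1 - decodeProb p ψ c m := by
  rw [decodeProb_eq_sum_bscProb, eq_sub_iff_add_eq, ← sum_add_distrib]
  convert sum_bscProb (p := p) (n := n) using 2 with e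
  split_ifs <;> simp_all

lemma sum_decodeProb_le_one (hp0 : 0 ≤ p) (hp1 : p ≤ 1) (ψ : (Fin n → ZMod 2) → M)
    (c : Fin n → ZMod 2) (S : Finset M) : ∑ m ∈ S, decodeProb p ψ c m ≤ 1 := by
  unfold decodeProb
  rw [sum_comm]
  calc ∑ y, ∑ m ∈ S, bscProb p (y - c) * (if ψ y = m then 1 else 0)
      = ∑ y, bscProb p (y - c) * (if ψ y ∈ S then 1 else 0) := by
        simp_rw [← mul_sum]
        simp only [sum_ite_eq]
    _ ≤ ∑ y, bscProb p (y - c) := sum_le_sum fun y _ =>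
        mul_le_of_le_one_right (bscProb_nonneg hp0 hp1 _) (by split_ifs <;> norm_num)
    _ = 1 := (Equiv.sum_comp (Equiv.subRight c) _).trans sum_bscProb

lemma pow_mul_decodeProb_le (hp0 : 0 ≤ p) (hp : p ≤ 1 / 2) (ψ : (Fin n → ZMod 2) → M)
    {c c' : Fin n → ZMod 2} {t : ℕ} (h : hammingDist c c' ≤ t) (m : M) :
    (p / (1 - p)) ^ t * decodeProb p ψ c m ≤ decodeProb p ψ c' m := by
  unfold decodeProb
  rw [mul_sum]
  refine sum_le_sum fun y _ => ?_
  rw [← mul_assoc]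
  refine mul_le_mul_of_nonneg_right (pow_mul_bscProb_le hp0 hp ?_) (by positivity)
  rwa [hammingDist_eq_hammingNorm, show -(y - c) + (y - c') = -c' + c by abel,
    ← hammingDist_eq_hammingNorm, hammingDist_comm]

end Decoding

section UpdateEfficiency

variable {p : ℝ} {k n t : ℕ} {φ : (Fin k → ZMod 2) → (Fin n → ZMod 2)}
  {ψ : (Fin n → ZMod 2) → (Fin k → ZMod 2)}

lemma hammingNorm_single_one (i : Fin k) : hammingNorm (Pi.single i 1 : Fin k → ZMod 2) = 1 := by
  simp [hammingNorm, Pi.single_apply, filter_eq']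

lemma single_one_injective :
    Function.Injective fun i : Fin k => (Pi.single i 1 : Fin k → ZMod 2) := by
  intro i j h
  by_contra hij
  simpa [Pi.single_apply, Ne.symm hij] using congrFun h i

lemma pow_mul_sum_decodeProb_add_single_le (hp0 : 0 ≤ p) (hp : p ≤ 1 / 2)
    (hupd : ∀ x e, hammingNorm e = 1 → hammingNorm (φ (x + e) - φ x) ≤ t)
    (x : Fin k → ZMod 2) :
    (p / (1 - p)) ^ t * ∑ i, decodeProb p ψ (φ (x + Pi.single i 1)) (x + Pi.single i 1) ≤ 1 := by
  calc (p / (1 - p)) ^ t * ∑ i, decodeProb p ψ (φ (x + Pi.single i 1)) (x + Pi.single i 1)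
      ≤ ∑ i, decodeProb p ψ (φ x) (x + Pi.single i 1) := by
        rw [mul_sum]
        gcongr with i
        refine pow_mul_decodeProb_le hp0 hp ψ ?_ _
        rw [hammingDist_comm, hammingDist_eq_hammingNorm, neg_add_eq_sub]
        exact hupd x _ (hammingNorm_single_one i)
    _ = ∑ m ∈ univ.image fun i => x + Pi.single i 1, decodeProb p ψ (φ x) m := by
        rw [sum_image fun i _ j _ h => single_one_injective (add_left_cancel h)]
    _ ≤ 1 := sum_decodeProb_le_one hp0 (by linarith) ψ _ _

lemma natCast_mul_pow_mul_sum_decodeProb_le (hp0 : 0 ≤ p) (hp : p ≤ 1 / 2)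
    (hupd : ∀ x e, hammingNorm e = 1 → hammingNorm (φ (x + e) - φ x) ≤ t) :
    k * (p / (1 - p)) ^ t * ∑ x, decodeProb p ψ (φ x) x ≤ 2 ^ k := by
  have hshift : ∀ c : Fin k → ZMod 2,
      ∑ x, decodeProb p ψ (φ (x + c)) (x + c) = ∑ x, decodeProb p ψ (φ x) x :=
    fun c => Equiv.sum_comp (Equiv.addRight c) fun x => decodeProb p ψ (φ x) x
  calc k * (p / (1 - p)) ^ t * ∑ x, decodeProb p ψ (φ x) x
      = ∑ x, (p / (1 - p)) ^ t *
          ∑ i, decodeProb p ψ (φ (x + Pi.single i 1)) (x + Pi.single i 1) := by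
        simp_rw [← mul_sum]
        rw [sum_comm]
        simp only [hshift, sum_const, card_univ, Fintype.card_fin, nsmul_eq_mul]
        ring
    _ ≤ ∑ _x : Fin k → ZMod 2, (1 : ℝ) :=
        sum_le_sum fun x _ => pow_mul_sum_decodeProb_add_single_le hp0 hp hupd x
    _ = 2 ^ k := by simp

end UpdateEfficiency

lemma rpow_le_mul_pow_of_le_logb {p α k : ℝ} {t : ℕ} (hp0 : 0 < p) (hp : p < 1 / 2) (hk : 0 < k)
    (ht : t ≤ (1 - α) * Real.logb 2 k / Real.logb 2 ((1 - p) / p)) :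
    k ^ α ≤ k * (p / (1 - p)) ^ t := by
  have hq : 0 < 1 - p := by linarith
  set b := (1 - p) / p
  have hb : 1 < b := (one_lt_div hp0).mpr (by linarith)
  have hlogb : 0 < Real.log b := Real.log_pos hb
  have hlog : t * Real.log b ≤ (1 - α) * Real.log k := by
    rwa [Real.logb, Real.logb, mul_div_assoc', div_div_div_cancel_right₀
      (Real.log_pos one_lt_two).ne', le_div_iff₀ hlogb] at ht
  have hbt : b ^ t ≤ k ^ (1 - α) := by
    rw [← Real.log_le_log_iff (by positivity) (by positivity), Real.log_pow, Real.log_rpow hk]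
    exact hlog
  calc k ^ α = k ^ α * b ^ t * (p / (1 - p)) ^ t := by
        rw [mul_assoc, ← mul_pow, div_mul_div_cancel₀ hp0.ne', div_self hq.ne', one_pow, mul_one]
    _ ≤ k ^ α * k ^ (1 - α) * (p / (1 - p)) ^ t := by gcongr
    _ = k * (p / (1 - p)) ^ t := by rw [← Real.rpow_add hk]; norm_num

theorem stmt_11_general (p α δ : ℝ) (hp0 : 0 < p) (hp1 : p < 1 / 2) (hα0 : 0 < α)
    (hδ : 0 < δ) :
    ∃ k₀ : ℕ, ∀ k : ℕ, k₀ ≤ k → ∀ n t : ℕ,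
      ∀ φ : (Fin k → ZMod 2) → (Fin n → ZMod 2), Function.Injective φ →
      (∀ x e : Fin k → ZMod 2, hammingNorm e = 1 → hammingNorm (φ (x + e) - φ x) ≤ t) →
      (t : ℝ) ≤ (1 - α) * Real.logb 2 k / Real.logb 2 ((1 - p) / p) →
      ∀ ψ : (Fin n → ZMod 2) → (Fin k → ZMod 2),
        1 - δ ≤ (2 : ℝ) ^ (-(k : ℝ)) * ∑ x : Fin k → ZMod 2, ∑ e : Fin n → ZMod 2,
          bscProb p e * (if ψ (φ x + e) ≠ x then 1 else 0) := by
  obtain ⟨k₀, hk₀⟩ := Filter.eventually_atTop.mp <| (Filter.eventually_gt_atTop 0).and <|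
    ((tendsto_rpow_atTop hα0).comp tendsto_natCast_atTop_atTop).eventually_ge_atTop (1 / δ)
  refine ⟨k₀, fun k hk n t φ _ hupd ht ψ => ?_⟩
  obtain ⟨hk, hkδ⟩ := hk₀ k hk
  set S := ∑ x, decodeProb p ψ (φ x) x
  have hS0 : 0 ≤ S := sum_nonneg fun x _ => decodeProb_nonneg hp0.le (by linarith) ψ _ _
  have hkγ := rpow_le_mul_pow_of_le_logb hp0 hp1 (Nat.cast_pos.mpr hk) ht
  have hSδ : 1 / δ * S ≤ 2 ^ k :=
    calc 1 / δ * S ≤ k * (p / (1 - p)) ^ t * S := by gcongr; exact hkδ.trans hkγ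
      _ ≤ 2 ^ k := natCast_mul_pow_mul_sum_decodeProb_le hp0.le hp1.le hupd
  have h2k : (0 : ℝ) < 2 ^ k := by positivity
  have hmean : (2 ^ k : ℝ)⁻¹ * S ≤ δ := by
    rw [one_div_mul_eq_div, div_le_iff₀ hδ] at hSδ
    rw [inv_mul_le_iff₀ h2k]
    linarith
  simp_rw [sum_bscProb_mul_ne_eq, sum_sub_distrib, sum_const, card_univ, Fintype.card_fun,
    ZMod.card, Fintype.card_fin]
  rw [Real.rpow_neg (by norm_num), Real.rpow_natCast, mul_sub, nsmul_one, Nat.cast_pow,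
    Nat.cast_ofNat, inv_mul_cancel₀ h2k.ne']
  linarith

/-- fix `p ∈ (0,1/2)`, `α ∈ (0,1)` and `δ > 0`.  For all large enough `k`,
any (possibly nonlinear) injective encoding `φ : F₂ᵏ → F₂ⁿ` with update-efficiency
`t ≤ (1−α) log₂ k / log₂((1−p)/p)` has average error probability at least `1 − δ` over
BSC(p), for every decoder. -/
theorem stmt_11 (p α δ : ℝ) (hp0 : 0 < p) (hp1 : p < 1 / 2) (hα0 : 0 < α) (hα1 : α < 1)
    (hδ : 0 < δ) :
    ∃ k₀ : ℕ, ∀ k : ℕ, k₀ ≤ k → ∀ n t : ℕ,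
      ∀ φ : (Fin k → ZMod 2) → (Fin n → ZMod 2), Function.Injective φ →
      (∀ x e : Fin k → ZMod 2, hammingNorm e = 1 → hammingNorm (φ (x + e) - φ x) ≤ t) →
      (t : ℝ) ≤ (1 - α) * Real.logb 2 k / Real.logb 2 ((1 - p) / p) →
      ∀ ψ : (Fin n → ZMod 2) → (Fin k → ZMod 2),
        1 - δ ≤ (2 : ℝ) ^ (-(k : ℝ)) * ∑ x : Fin k → ZMod 2, ∑ e : Fin n → ZMod 2,
          bscProb p e * (if ψ (φ x + e) ≠ x then 1 else 0) :=
  stmt_11_general p α δ hp0 hp1 hα0 hδ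
end

section
/- Let n ≥ 1 and r ≥ 0 be integers, and for each i ∈ {1,…,n} let R_i ⊆ {1,…,n}\{i} be a set with |R_i| ≤ r. Then there exists a permutation π of {1,…,n} and a subset T ⊆ {1,…,n} with |T| ≥ n/(r+1) such that for every i ∈ T and every j ∈ R_i, j appears before i in the ordering given by π (i.e., π⁻¹(j) < π⁻¹(i)). -/
/-!
Instead of averaging over random permutations, build the ordering greedily: pick any remaining
coordinate `i`, list its remaining query positions `R i` followed by `i`, discard these at most
`r + 1` coordinates and recurse. Every round contributes one coordinate preceded by all its query
positions and uses up at most `r + 1` coordinates.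
-/

open Finset
open scoped List

theorem List.Nodup.idxOf_lt_idxOf_of_pair_sublist {α : Type*} [DecidableEq α] {l : List α}
    {a b : α} (hl : l.Nodup) (hab : [a, b] <+ l) : l.idxOf a < l.idxOf b := by
  obtain ⟨l₁, l₂, rfl, ha, hb⟩ := List.cons_sublist_iff.1 hab
  have hb₁ : b ∉ l₁ := fun hb₁ =>
    List.disjoint_of_nodup_append hl hb₁ (List.singleton_sublist.1 hb)
  rw [List.idxOf_append_of_mem ha, List.idxOf_append_of_notMem hb₁]
  exact (List.idxOf_lt_length_iff.2 ha).trans_le (Nat.le_add_right _ _)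

theorem exists_perm_symm_lt_of_pair_sublist {n : ℕ} {l : List (Fin n)} (hl : l.Nodup)
    (hmem : ∀ x, x ∈ l) :
    ∃ π : Equiv.Perm (Fin n), ∀ a b, [a, b] <+ l → π.symm a < π.symm b := by
  have hlen : l.length = n := by
    have huniv : l.toFinset = univ := eq_univ_of_forall fun x => List.mem_toFinset.2 (hmem x)
    rw [← List.toFinset_card_of_nodup hl, huniv, card_fin]
  refine ⟨(finCongr hlen).symm.trans (hl.getEquivOfForallMemList l hmem), fun a b hab => ?_⟩
  simpa [Fin.lt_def] using hl.idxOf_lt_idxOf_of_pair_sublist hab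

theorem exists_ordering_with_large_preceded_set {α : Type*} [DecidableEq α] {r : ℕ}
    (R : α → Finset α) (hirr : ∀ i, i ∉ R i) (hcard : ∀ i, #(R i) ≤ r) (A : Finset α) :
    ∃ l : List α, l.Nodup ∧ l.toFinset = A ∧ ∃ T ⊆ A, #A ≤ (r + 1) * #T ∧
      ∀ i ∈ T, ∀ j ∈ R i, j ∈ A → [j, i] <+ l := by
  induction A using Finset.strongInduction with
  | _ A ih =>
  rcases A.eq_empty_or_nonempty with rfl | ⟨i, hi⟩
  · exact ⟨[], List.nodup_nil, rfl, ∅, empty_subset _, by simp, by simp⟩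
  set A' := A \ insert i (R i)
  have hA' : A' ⊂ A := (ssubset_iff_of_subset sdiff_subset).2 ⟨i, hi, by simp⟩
  obtain ⟨l', hl'nd, hl', T', hT'A', hcard', hT'⟩ := ih A' hA'
  set block := (R i ∩ A).toList ++ [i]
  have hblock : ∀ x, x ∈ block ↔ x ∈ A ∧ x ∈ insert i (R i) := fun x => by aesop
  refine ⟨block ++ l', ?_, ?_, insert i T', ?_, ?_, ?_⟩
  · have hblock_nd : block.Nodup := List.nodup_append.2 ⟨nodup_toList _, List.nodup_singleton i,
      fun a ha b hb hab => hirr i (by simp_all)⟩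
    refine List.nodup_append.2 ⟨hblock_nd, hl'nd, fun a ha b hb => ?_⟩
    rintro rfl
    have hbA' : a ∈ A' := hl' ▸ List.mem_toFinset.2 hb
    exact (mem_sdiff.1 hbA').2 ((hblock a).1 ha).2
  · ext x
    rw [List.mem_toFinset, List.mem_append, hblock, ← List.mem_toFinset, hl', mem_sdiff]
    tauto
  · exact insert_subset hi (hT'A'.trans sdiff_subset)
  · have hiT' : i ∉ T' := fun h => by simpa [A'] using hT'A' h
    calc #A ≤ #A' + #(insert i (R i)) := card_le_card_sdiff_add_card
      _ ≤ (r + 1) * #T' + (r + 1) :=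
        add_le_add hcard' ((card_insert_le _ _).trans (Nat.add_le_add_right (hcard i) 1))
      _ = (r + 1) * #(insert i T') := by rw [card_insert_of_notMem hiT']; ring
  · intro i' hi' j hj hjA
    rcases mem_insert.1 hi' with rfl | hi'T
    · have hj_list : j ∈ (R i' ∩ A).toList := by simpa using ⟨hj, hjA⟩
      exact ((List.singleton_sublist.2 hj_list).append (List.Sublist.refl [i'])).trans
        (List.sublist_append_left _ _)
    have hi'l' : i' ∈ l' := List.mem_toFinset.1 (hl' ▸ hT'A' hi'T)
    by_cases hjS : j ∈ insert i (R i)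
    · exact (List.singleton_sublist.2 ((hblock j).2 ⟨hjA, hjS⟩)).append
        (List.singleton_sublist.2 hi'l')
    · exact (hT' i' hi'T j hj (mem_sdiff.2 ⟨hjA, hjS⟩)).trans (List.sublist_append_right _ _)

theorem stmt_16_general {n r : ℕ} (R : Fin n → Finset (Fin n))
    (hR : ∀ i, i ∉ R i ∧ (R i).card ≤ r) :
    ∃ (π : Equiv.Perm (Fin n)) (T : Finset (Fin n)),
      (n : ℝ) / ((r : ℝ) + 1) ≤ (T.card : ℝ) ∧
      ∀ i ∈ T, ∀ j ∈ R i, π.symm j < π.symm i := by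
  obtain ⟨l, hnd, hl, T, -, hcard, hT⟩ :=
    exists_ordering_with_large_preceded_set R (fun i => (hR i).1) (fun i => (hR i).2) univ
  obtain ⟨π, hπ⟩ :=
    exists_perm_symm_lt_of_pair_sublist hnd fun x => List.mem_toFinset.1 (hl ▸ mem_univ x)
  refine ⟨π, T, ?_, fun i hi j hj => hπ j i (hT i hi j hj (mem_univ j))⟩
  have hn : n ≤ (r + 1) * #T := by simpa using hcard
  rw [div_le_iff₀ (by positivity)]
  exact_mod_cast (mul_comm (r + 1) #T) ▸ hn

/-- given, for each `i ∈ {1,…,n}`, a set `R_i ⊆ {1,…,n}\{i}` with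
`|R_i| ≤ r`, there are a permutation `π` of the coordinates and a set `T` with
`|T| ≥ n/(r+1)` such that every `i ∈ T` is preceded (in the order given by `π`) by all
elements of `R_i`. -/
theorem stmt_16 {n r : ℕ} (hn : 1 ≤ n) (R : Fin n → Finset (Fin n))
    (hR : ∀ i, i ∉ R i ∧ (R i).card ≤ r) :
    ∃ (π : Equiv.Perm (Fin n)) (T : Finset (Fin n)),
      (n : ℝ) / ((r : ℝ) + 1) ≤ (T.card : ℝ) ∧
      ∀ i ∈ T, ∀ j ∈ R i, π.symm j < π.symm i :=
  stmt_16_general R hR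
end

section
/- Let 0 ≤ u ≤ k and suppose there exists a (u, t)-update-efficient code of length n and dimension k whose image has minimum distance d (with d ≥ 1), i.e., an injective map φ : F₂ᵏ → F₂ⁿ such that wt(φ(x + e) − φ(x)) ≤ t whenever wt(e) ≤ u, and whose image has minimum pairwise Hamming distance d. Then Σ_{i=0}^{u} C(k, i) ≤ B(n, d, t), where B(n, d, w) denotes the maximum size of a set of vectors in F₂ⁿ each of Hamming weight at most w and with pairwise Hamming distance at least d. Concretely, there exists a set S ⊆ F₂ⁿ with |S| ≥ Σ_{i=0}^{u} C(k, i), every element of S of Hamming weight at most t, and any two distinct elements of S at Hamming distance at least d. -/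
open Finset

lemma count_low_weight (k u : ℕ) :
    (∑ i ∈ Finset.range (u + 1), k.choose i) =
      (Finset.univ.filter (fun v : Fin k → ZMod 2 => hammingNorm v ≤ u)).card := by
  classical
  have hsplit : (Finset.univ.filter (fun v : Fin k → ZMod 2 => hammingNorm v ≤ u))
      = (Finset.range (u+1)).biUnion
        (fun i => Finset.univ.filter (fun v : Fin k → ZMod 2 => hammingNorm v = i)) := by
    ext v
    simp [Nat.lt_succ_iff]
  rw [hsplit, Finset.card_biUnion]
  · refine Finset.sum_congr rfl fun i _ => ?_
    -- card of vectors with hammingNorm = i equals k.choose i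
    have : (Finset.univ.filter (fun v : Fin k → ZMod 2 => hammingNorm v = i)).card
        = (Finset.powersetCard i (Finset.univ : Finset (Fin k))).card := by
      apply Finset.card_bij (fun v _ => Finset.univ.filter (fun j => v j ≠ 0))
      · intro v hv
        simp only [Finset.mem_filter, Finset.mem_univ, true_and] at hv
        simp [Finset.mem_powersetCard, ← hv, hammingNorm]
      · intro a ha b hb hab
        simp only [Finset.mem_filter, Finset.mem_univ, true_and] at ha hb
        funext j
        have := Finset.ext_iff.mp hab j
        simp only [Finset.mem_filter, Finset.mem_univ, true_and] at this
        have hone : ∀ x : ZMod 2, x ≠ 0 → x = 1 := by decide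
        by_cases haj : a j = 0
        · by_cases hbj : b j = 0
          · rw [haj, hbj]
          · exact absurd (this.mpr hbj) (by simp [haj])
        · have hbj : b j ≠ 0 := this.mp haj
          rw [hone _ haj, hone _ hbj]
      · intro s hs
        refine ⟨fun j => if j ∈ s then 1 else 0, ?_, ?_⟩
        · simp only [Finset.mem_filter, Finset.mem_univ, true_and]
          simp only [Finset.mem_powersetCard] at hs
          rw [← hs.2, hammingNorm]
          congr 1
          ext j
          by_cases hj : j ∈ s <;> simp [hj]
        · ext j
          by_cases hj : j ∈ s <;> simp [hj]
    rw [this, Finset.card_powersetCard, Finset.card_univ, Fintype.card_fin]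
  · intro a _ b _ hab
    simp only [Finset.disjoint_left, Finset.mem_filter, Finset.mem_univ, true_and]
    rintro v rfl h; exact hab h

/-- if a `(u,t)`-update-efficient code of length `n` and dimension `k`
(`u ≤ k`) has image with minimum pairwise Hamming distance `d ≥ 1`, then
`Σ_{i=0}^{u} C(k,i) ≤ B(n,d,t)`: concretely, there is a set `S ⊆ F₂ⁿ` of size at least
`Σ_{i=0}^{u} C(k,i)` whose elements all have Hamming weight at most `t` and are pairwise at
Hamming distance at least `d`. -/
theorem stmt_18 {n k u t d : ℕ} (hu : u ≤ k) (hd : 1 ≤ d)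
    (φ : (Fin k → ZMod 2) → (Fin n → ZMod 2)) (hφ : Function.Injective φ)
    (hue : ∀ x e : Fin k → ZMod 2, hammingNorm e ≤ u →
      hammingNorm (φ (x + e) - φ x) ≤ t)
    (hmind : IsLeast {d' : ℕ | ∃ x y : Fin k → ZMod 2, x ≠ y ∧
      hammingDist (φ x) (φ y) = d'} d) :
    ∃ S : Finset (Fin n → ZMod 2),
      (∑ i ∈ Finset.range (u + 1), k.choose i) ≤ S.card ∧
      (∀ v ∈ S, hammingNorm v ≤ t) ∧
      ∀ v ∈ S, ∀ w ∈ S, v ≠ w → d ≤ hammingDist v w := by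
  classical
  let E := Finset.univ.filter (fun v : Fin k → ZMod 2 => hammingNorm v ≤ u)
  refine ⟨E.image (fun e => φ e - φ 0), ?_, ?_, ?_⟩
  · rw [Finset.card_image_of_injective _ (fun a b hab => hφ (by
      have : φ a - φ 0 = φ b - φ 0 := hab
      linear_combination (norm := abel) this))]
    exact (count_low_weight k u).le
  · intro v hv
    simp only [Finset.mem_image, E, Finset.mem_filter, Finset.mem_univ, true_and] at hv
    obtain ⟨e, he, rfl⟩ := hv
    have := hue 0 e he
    simpa using this
  · intro v hv w hw hvw
    simp only [Finset.mem_image, E, Finset.mem_filter, Finset.mem_univ, true_and] at hv hw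
    obtain ⟨e, he, rfl⟩ := hv
    obtain ⟨f, hf, rfl⟩ := hw
    have hef : e ≠ f := fun h => hvw (by rw [h])
    have : hammingDist (φ e - φ 0) (φ f - φ 0) = hammingDist (φ e) (φ f) := by
      rw [hammingDist_eq_hammingNorm, hammingDist_eq_hammingNorm]
      congr 1; abel
    rw [this]
    exact hmind.2 ⟨e, f, hef, rfl⟩
end
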